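/- arXiv:1709.04286 — 4 statements merged into one kernel-verified Lean document; each statement's English description precedes it below -/
import Mathlib

section
/- For every integer m ≥ 1, the interleaving map B : (ℝ≥0)^m → ℝ≥0 is injective and measurable; consequently B is a measurable embedding: its range B((ℝ≥0)^m) is a Borel subset of ℝ≥0 and the inverse map, defined on this range, is measurable. -/
open MeasureTheory

/-- The set `D` of admissible binary digit sequences: not all `1` below any index,
and eventually `0` towards `+∞`. -/
def D : Set (ℤ → Fin 2) :=
  {ι | (∀ n : ℤ, ∃ m ≤ n, ι m = 0) ∧ ∃ m : ℤ, ∀ n ≥ m, ι n = 0}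

/-- `Φ(ι) = ∑_{n ∈ ℤ} ι_n 2^n`. -/
noncomputable def Phi (ι : ℤ → Fin 2) : NNReal :=
  ∑' n : ℤ, ((ι n : ℕ) : NNReal) * 2 ^ n

/-- The binary digit map `b(x)_n = ⌊x 2^{-n}⌋ mod 2`. -/
noncomputable def bmap (x : NNReal) : ℤ → Fin 2 := fun n =>
  ⟨⌊(x : ℝ) * 2 ^ (-n)⌋₊ % 2, Nat.mod_lt _ (by norm_num)⟩

/-- The interleaving map `B(x) = Φ(q ↦ b(x_{q mod m})_{⌊q/m⌋})`. -/
noncomputable def Bmap (m : ℕ) (x : Fin m → NNReal) : NNReal :=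
  Phi fun q : ℤ =>
    if h : 0 < m then
      bmap (x ⟨(q % (m : ℤ)).toNat, by
        have hm' : (0 : ℤ) < (m : ℤ) := by exact_mod_cast h
        have h1 := Int.emod_lt_of_pos q hm'
        have h2 := Int.emod_nonneg q hm'.ne'
        omega⟩) (q / (m : ℤ))
    else 0

open scoped ENNReal NNReal

noncomputable def Tsum2 (ι : ℤ → Fin 2) : ℝ≥0∞ := ∑' k : ℤ, ((ι k : ℕ) : ℝ≥0∞) * 2 ^ k

lemma Phi_eq (ι : ℤ → Fin 2) : Phi ι = (Tsum2 ι).toNNReal := by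
  rw [Phi, NNReal.tsum_eq_toNNReal_tsum, Tsum2]
  congr 1
  refine tsum_congr fun k => ?_
  rw [ENNReal.coe_mul, ENNReal.coe_zpow two_ne_zero]
  norm_cast

lemma tsum_neg_zpow : ∑' k : ℤ, (if k < 0 then (2:ℝ≥0∞) ^ k else 0) = 1 := by
  have hinj : Function.Injective (fun j : ℕ => (-(j+1) : ℤ)) := by
    intro a b h; simpa using h
  have hsupp : Function.support (fun k : ℤ => if k < 0 then (2:ℝ≥0∞) ^ k else 0)
      ⊆ Set.range (fun j : ℕ => (-(j+1) : ℤ)) := by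
    intro k hk
    simp only [Function.mem_support, ne_eq, ite_eq_right_iff, not_forall] at hk
    obtain ⟨hk1, -⟩ := hk
    refine ⟨(-k-1).toNat, ?_⟩
    simp only []
    omega
  rw [← hinj.tsum_eq hsupp]
  have : ∀ j : ℕ, (if (-(j+1):ℤ) < 0 then (2:ℝ≥0∞) ^ (-(j+1):ℤ) else 0)
      = 2⁻¹ * (2⁻¹ : ℝ≥0∞) ^ j := by
    intro j
    rw [if_pos (by omega)]
    have : (-(j+1):ℤ) = (-1) + (-(j:ℤ)) := by ring
    rw [this, ENNReal.zpow_add two_ne_zero (by norm_num), ENNReal.zpow_neg,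
      ENNReal.zpow_neg, zpow_one, zpow_natCast, ENNReal.inv_pow]
  simp only [this]
  rw [ENNReal.tsum_mul_left, ENNReal.tsum_geometric, ENNReal.one_sub_inv_two]
  rw [inv_inv]
  exact ENNReal.inv_mul_cancel two_ne_zero (by norm_num)

lemma toReal_two_zpow (z : ℤ) : ((2:ℝ≥0∞) ^ z).toReal = (2:ℝ) ^ z := by
  rw [show (2:ℝ≥0∞) = ((2:ℝ≥0):ℝ≥0∞) from rfl, ← ENNReal.coe_zpow two_ne_zero,
    ENNReal.coe_toReal, NNReal.coe_zpow]
  norm_num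

lemma Tsum2_split (ι : ℤ → Fin 2) (hD : ι ∈ D) :
    ∃ A : ℕ, ∃ r : ℝ≥0∞, r < 1 ∧ Tsum2 ι = A + r ∧ A % 2 = (ι 0 : ℕ) := by
  obtain ⟨h1, m, hm⟩ := hD
  -- choose M : ℕ, M ≥ 1, digits vanish above M
  set M : ℕ := max m.toNat 1 with hMdef
  have hM : ∀ k : ℤ, (M:ℤ) ≤ k → ι k = 0 := by
    intro k hk
    apply hm
    have : (m.toNat : ℤ) ≤ (M:ℤ) := by exact_mod_cast Nat.le_max_left _ _
    omega
  set A : ℕ := ∑ j ∈ Finset.range M, (ι (j:ℤ) : ℕ) * 2^j with hAdef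
  set r : ℝ≥0∞ := ∑' k : ℤ, (if k < 0 then ((ι k : ℕ) : ℝ≥0∞) * 2 ^ k else 0) with hrdef
  -- r < 1
  obtain ⟨m0, hm0le, hm0⟩ := h1 (-1)
  have hrle : r ≤ ∑' k : ℤ, (if k < 0 ∧ k ≠ m0 then (2:ℝ≥0∞) ^ k else 0) := by
    refine ENNReal.tsum_le_tsum fun k => ?_
    by_cases hk : k < 0
    · by_cases hkm : k = m0
      · subst hkm; simp [hk, hm0]
      · rw [if_pos hk, if_pos ⟨hk, hkm⟩]
        have : ((ι k : ℕ) : ℝ≥0∞) ≤ 1 := by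
          have := (ι k).isLt
          interval_cases h : (ι k : ℕ) <;> simp
        calc ((ι k : ℕ) : ℝ≥0∞) * 2 ^ k ≤ 1 * 2 ^ k := by gcongr
          _ = 2 ^ k := one_mul _
    · simp [hk]
  have hsum1 : (∑' k : ℤ, (if k < 0 ∧ k ≠ m0 then (2:ℝ≥0∞) ^ k else 0)) + 2 ^ m0 = 1 := by
    have : (∑' k : ℤ, (if k = m0 then (2:ℝ≥0∞) ^ k else 0)) = 2 ^ m0 := by
      rw [show (fun k : ℤ => if k = m0 then (2:ℝ≥0∞) ^ k else 0)
        = fun k : ℤ => if k = m0 then (2:ℝ≥0∞) ^ m0 else 0 from funext fun k => by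
          by_cases h : k = m0 <;> simp [h]]
      exact tsum_ite_eq m0 _
    rw [← this, ← ENNReal.tsum_add, ← tsum_neg_zpow]
    refine tsum_congr fun k => ?_
    by_cases hk : k < 0
    · by_cases hkm : k = m0
      · subst hkm; simp [hk]
      · simp [hk, hkm]
    · have : k ≠ m0 := by omega
      simp [hk, this]
  have h2 : (∑' k : ℤ, (if k < 0 ∧ k ≠ m0 then (2:ℝ≥0∞) ^ k else 0)) ≤ 1 :=
    le_of_add_le_left hsum1.le
  have hrne : r ≠ ⊤ := ((hrle.trans h2).trans_lt (by simp)).ne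
  have hrlt : r < 1 := by
    calc r < r + 2 ^ m0 :=
        ENNReal.lt_add_right hrne (ENNReal.zpow_pos two_ne_zero (by norm_num) m0).ne'
      _ ≤ (∑' k : ℤ, (if k < 0 ∧ k ≠ m0 then (2:ℝ≥0∞) ^ k else 0)) + 2 ^ m0 := by gcongr
      _ = 1 := hsum1
  -- the nonneg part equals A
  have ha : (∑' k : ℤ, (if 0 ≤ k then ((ι k : ℕ) : ℝ≥0∞) * 2 ^ k else 0)) = (A : ℝ≥0∞) := by
    have hemb : Function.Injective (Nat.cast : ℕ → ℤ) := fun a b h => Int.natCast_inj.mp h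
    have hzero : ∀ b ∉ Finset.map ⟨(Nat.cast : ℕ → ℤ), hemb⟩ (Finset.range M),
        (if 0 ≤ b then ((ι b : ℕ) : ℝ≥0∞) * 2 ^ b else 0) = 0 := by
      intro b hb
      simp only [Finset.mem_map, Finset.mem_range, Function.Embedding.coeFn_mk] at hb
      by_cases h0 : 0 ≤ b
      · have hbM : (M:ℤ) ≤ b := by
          by_contra hlt
          exact hb ⟨b.toNat, by omega, by omega⟩
        simp [hM b hbM]
      · simp [h0]
    rw [tsum_eq_sum hzero, Finset.sum_map, hAdef]
    push_cast
    refine Finset.sum_congr rfl fun j hj => ?_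
    simp only [Function.Embedding.coeFn_mk, Int.natCast_nonneg, if_true]
    rw [zpow_natCast]
  have hsplit : Tsum2 ι = A + r := by
    rw [Tsum2, ← ha, hrdef, ← ENNReal.tsum_add]
    refine tsum_congr fun k => ?_
    by_cases hk : 0 ≤ k
    · simp [hk, not_lt.mpr hk]
    · simp [hk, lt_of_not_ge hk]
  -- parity
  have hpar : A % 2 = (ι 0 : ℕ) := by
    have hM1 : M = (M - 1) + 1 := by omega
    rw [hAdef, hM1, Finset.sum_range_succ']
    have : ∑ j ∈ Finset.range (M-1), (ι ((j+1 : ℕ):ℤ) : ℕ) * 2^(j+1)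
        = 2 * ∑ j ∈ Finset.range (M-1), (ι ((j+1 : ℕ):ℤ) : ℕ) * 2^j := by
      rw [Finset.mul_sum]; refine Finset.sum_congr rfl fun j _ => by ring
    rw [this]
    simp only [pow_zero, mul_one, Nat.cast_zero]
    omega
  exact ⟨A, r, hrlt, hsplit, hpar⟩

lemma Tsum2_shift (ι : ℤ → Fin 2) (n : ℤ) :
    Tsum2 (fun k => ι (k + n)) = Tsum2 ι * 2 ^ (-n) := by
  have h : Tsum2 ι = Tsum2 (fun k => ι (k + n)) * 2 ^ n := by
    rw [Tsum2, ← Equiv.tsum_eq (Equiv.addRight n) (fun k => ((ι k : ℕ) : ℝ≥0∞) * 2 ^ k)]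
    simp only [Equiv.coe_addRight]
    rw [Tsum2, ← ENNReal.tsum_mul_right]
    refine tsum_congr fun k => ?_
    rw [ENNReal.zpow_add two_ne_zero (by norm_num), mul_assoc]
  rw [h, mul_assoc, ← ENNReal.zpow_add two_ne_zero (by norm_num), add_neg_cancel,
    zpow_zero, mul_one]

lemma shift_mem_D (ι : ℤ → Fin 2) (hD : ι ∈ D) (n : ℤ) : (fun k => ι (k + n)) ∈ D := by
  obtain ⟨h1, m, hm⟩ := hD
  constructor
  · intro k
    obtain ⟨j, hj, hj0⟩ := h1 (k + n)
    exact ⟨j - n, by omega, by simpa using hj0⟩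
  · exact ⟨m - n, fun k hk => hm _ (by omega)⟩

lemma Tsum2_ne_top (ι : ℤ → Fin 2) (hD : ι ∈ D) : Tsum2 ι ≠ ⊤ := by
  obtain ⟨A, r, hr, hsplit, -⟩ := Tsum2_split ι hD
  rw [hsplit]
  exact ENNReal.add_ne_top.mpr ⟨by simp, (hr.trans (by simp)).ne⟩

lemma coe_Phi (ι : ℤ → Fin 2) : ((Phi ι : NNReal) : ℝ) = (Tsum2 ι).toReal := by
  rw [Phi_eq]; rfl

lemma bmap_def (x : NNReal) (n : ℤ) : (bmap x n : ℕ) = ⌊(x : ℝ) * 2 ^ (-n)⌋₊ % 2 := rfl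

lemma bmap_Phi (ι : ℤ → Fin 2) (hD : ι ∈ D) : bmap (Phi ι) = ι := by
  funext n
  set σ : ℤ → Fin 2 := fun k => ι (k + n) with hσ
  have hσD : σ ∈ D := shift_mem_D ι hD n
  obtain ⟨A, r, hr, hsplit, hpar⟩ := Tsum2_split σ hσD
  have hrtop : r ≠ ⊤ := (hr.trans (by simp)).ne
  have hkey : ((Phi ι : NNReal) : ℝ) * 2 ^ (-n) = ((Phi σ : NNReal) : ℝ) := by
    rw [coe_Phi, coe_Phi, Tsum2_shift ι n, ENNReal.toReal_mul, toReal_two_zpow]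
  have hfloor : ⌊((Phi σ : NNReal) : ℝ)⌋₊ = A := by
    rw [coe_Phi, hsplit, ENNReal.toReal_add (by simp) hrtop, ENNReal.toReal_natCast]
    have hr0 : 0 ≤ r.toReal := ENNReal.toReal_nonneg
    have hr1 : r.toReal < 1 := by
      have := (ENNReal.toReal_lt_toReal hrtop (by simp : (1:ℝ≥0∞) ≠ ⊤)).mpr hr
      simpa using this
    rw [add_comm, Nat.floor_add_natCast hr0, Nat.floor_eq_zero.mpr hr1, zero_add]
  have : (bmap (Phi ι) n : ℕ) = (ι n : ℕ) := by
    rw [bmap_def, hkey, hfloor, hpar, hσ]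
    simp
  exact Fin.ext this

lemma Phi_injOn : ∀ ι ∈ D, ∀ κ ∈ D, Phi ι = Phi κ → ι = κ := by
  intro ι hι κ hκ h
  rw [← bmap_Phi ι hι, ← bmap_Phi κ hκ, h]

lemma floor_succ (x : NNReal) (k : ℤ) :
    ⌊(x : ℝ) * 2 ^ (-(k+1))⌋₊ = ⌊(x : ℝ) * 2 ^ (-k)⌋₊ / 2 := by
  have h : (x : ℝ) * 2 ^ (-(k+1)) = ((x : ℝ) * 2 ^ (-k)) / ((2:ℕ) : ℝ) := by
    rw [show (-(k+1) : ℤ) = -k + (-1) from by ring, zpow_add₀ (by norm_num : (2:ℝ) ≠ 0)]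
    push_cast
    rw [zpow_neg_one]
    ring
  rw [h, Nat.floor_div_natCast]

lemma exists_high_zero (x : NNReal) : ∃ N : ℤ, ∀ k : ℤ, N ≤ k → ⌊(x : ℝ) * 2 ^ (-k)⌋₊ = 0 := by
  obtain ⟨n, hn⟩ := pow_unbounded_of_one_lt (x : ℝ) (by norm_num : (1:ℝ) < 2)
  refine ⟨n, fun k hk => Nat.floor_eq_zero.mpr ?_⟩
  have h1 : (2:ℝ) ^ (-k) ≤ 2 ^ (-(n:ℤ)) := by
    apply zpow_le_zpow_right₀ (by norm_num : (1:ℝ) ≤ 2); omega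
  have h2 : (x:ℝ) * 2 ^ (-k) ≤ (x:ℝ) * 2 ^ (-(n:ℤ)) :=
    mul_le_mul_of_nonneg_left h1 x.coe_nonneg
  have h3 : (x:ℝ) * 2 ^ (-(n:ℤ)) < 2 ^ (n:ℤ) * 2 ^ (-(n:ℤ)) := by
    apply mul_lt_mul_of_pos_right _ (zpow_pos (by norm_num) _)
    rwa [zpow_natCast]
  have h4 : (2:ℝ) ^ (n:ℤ) * 2 ^ (-(n:ℤ)) = 1 := by
    rw [← zpow_add₀ (by norm_num : (2:ℝ) ≠ 0)]; simp
  calc (x:ℝ) * 2 ^ (-k) ≤ (x:ℝ) * 2 ^ (-(n:ℤ)) := h2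
    _ < 1 := h4 ▸ h3

lemma floor_mul_le (x : NNReal) (k : ℤ) : (⌊(x : ℝ) * 2 ^ (-k)⌋₊ : ℝ) * 2 ^ k ≤ x := by
  have h := Nat.floor_le (by positivity : (0:ℝ) ≤ (x : ℝ) * 2 ^ (-k))
  have h2 : (⌊(x : ℝ) * 2 ^ (-k)⌋₊ : ℝ) * 2 ^ k ≤ ((x : ℝ) * 2 ^ (-k)) * 2 ^ k :=
    mul_le_mul_of_nonneg_right h (by positivity)
  calc (⌊(x : ℝ) * 2 ^ (-k)⌋₊ : ℝ) * 2 ^ k ≤ ((x : ℝ) * 2 ^ (-k)) * 2 ^ k := h2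
    _ = x := by
        rw [mul_assoc, ← zpow_add₀ (by norm_num : (2:ℝ) ≠ 0)]; simp

lemma lt_floor_bound (x : NNReal) (k : ℤ) :
    (x : ℝ) < ((⌊(x : ℝ) * 2 ^ (-k)⌋₊ : ℝ) + 1) * 2 ^ k := by
  have h := Nat.lt_floor_add_one ((x : ℝ) * 2 ^ (-k))
  have h2 : ((x : ℝ) * 2 ^ (-k)) * 2 ^ k < ((⌊(x : ℝ) * 2 ^ (-k)⌋₊ : ℝ) + 1) * 2 ^ k :=
    mul_lt_mul_of_pos_right h (by positivity)
  calc (x:ℝ) = ((x : ℝ) * 2 ^ (-k)) * 2 ^ k := by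
        rw [mul_assoc, ← zpow_add₀ (by norm_num : (2:ℝ) ≠ 0)]; simp
    _ < _ := h2

lemma small_zpow (c : ℝ) (hc : 0 < c) (ε : ℝ) (hε : 0 < ε) :
    ∃ k : ℤ, c * (2:ℝ) ^ k < ε := by
  obtain ⟨j, hj⟩ := exists_pow_lt_of_lt_one (by positivity : (0:ℝ) < ε / c)
    (by norm_num : (2:ℝ)⁻¹ < 1)
  refine ⟨-(j:ℤ), ?_⟩
  have h2 : (2:ℝ) ^ (-(j:ℤ)) = (2:ℝ)⁻¹ ^ j := by
    rw [zpow_neg, zpow_natCast, inv_pow]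
  rw [h2]
  calc c * (2:ℝ)⁻¹ ^ j < c * (ε / c) := by
        exact mul_lt_mul_of_pos_left hj hc
    _ = ε := by field_simp

lemma bmap_mem_D (x : NNReal) : bmap x ∈ D := by
  constructor
  · -- no all-ones tail downward
    intro n
    by_contra hcon
    push_neg at hcon
    set a : ℤ → ℕ := fun k => ⌊(x : ℝ) * 2 ^ (-k)⌋₊ with ha
    have hone : ∀ k ≤ n, a k % 2 = 1 := by
      intro k hk
      have := hcon k hk
      have hlt : (bmap x k : ℕ) < 2 := (bmap x k).isLt
      have hne : (bmap x k : ℕ) ≠ 0 := fun h => this (Fin.ext h)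
      have : (bmap x k : ℕ) = a k % 2 := rfl
      omega
    have hstep : ∀ k ≤ n, a (k - 1) = 2 * a k + 1 := by
      intro k hk
      have h1 : a k = a (k-1) / 2 := by
        have h := floor_succ x (k - 1)
        rw [show (-(k - 1 + 1) : ℤ) = -k from by ring] at h
        exact h
      have h2 : a (k-1) % 2 = 1 := hone (k-1) (by omega)
      omega
    set e : ℤ → ℝ := fun k => (2:ℝ) ^ k with he
    have hee : ∀ k : ℤ, e k = 2 * e (k - 1) := by
      intro k
      rw [he]
      simp only []
      rw [show k = 1 + (k - 1) from by ring, zpow_add₀ (by norm_num : (2:ℝ) ≠ 0)]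
      rw [show (1 + (k-1) - 1 : ℤ) = k - 1 from by ring]
      norm_num
    have hclaim : ∀ j : ℕ, (a (n - j) : ℝ) * e (n - j) = (a n : ℝ) * e n + e n - e (n - j) := by
      intro j
      induction j with
      | zero => simp
      | succ j ih =>
        have hk : (n - j : ℤ) ≤ n := by omega
        have hs := hstep (n - j) hk
        have hcast : (n - (j+1 : ℕ) : ℤ) = (n - j) - 1 := by push_cast; ring
        rw [hcast, hs]
        push_cast
        rw [hee (n - (j:ℤ))] at ih
        ring_nf at ih ⊢
        linarith [ih]
    have hub : ∀ j : ℕ, (a n : ℝ) * e n + e n - e (n - j) ≤ x := by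
      intro j
      rw [← hclaim j]
      exact floor_mul_le x (n - j)
    have hle : (a n : ℝ) * e n + e n ≤ x := by
      apply le_of_forall_pos_le_add
      intro ε hε
      obtain ⟨j, hj⟩ := pow_unbounded_of_one_lt (e n / ε) (by norm_num : (1:ℝ) < 2)
      have h2p : (0:ℝ) < 2 ^ j := by positivity
      have hlt : e n < ε * 2 ^ j := by
        rw [div_lt_iff₀ hε] at hj; linarith
      have hj2 : e (n - (j:ℤ)) < ε := by
        have heq : e (n - (j:ℤ)) = e n / 2 ^ j := by
          show (2:ℝ) ^ (n - (j:ℤ)) = (2:ℝ) ^ n / 2 ^ j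
          rw [show (n - (j:ℤ)) = n + (-(j:ℤ)) from by ring,
            zpow_add₀ (by norm_num : (2:ℝ) ≠ 0), zpow_neg, zpow_natCast]
          ring
        rw [heq, div_lt_iff₀ h2p]
        linarith
      have := hub j
      linarith
    have hfb : (x:ℝ) < ((a n : ℝ) + 1) * e n := lt_floor_bound x n
    nlinarith [hle, hfb]
  · -- eventually zero
    obtain ⟨N, hN⟩ := exists_high_zero x
    refine ⟨N, fun k hk => Fin.ext ?_⟩
    show (bmap x k : ℕ) = ((0 : Fin 2) : ℕ)
    rw [bmap_def, hN k hk]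
    rfl

lemma bmap_injective : Function.Injective bmap := by
  intro x y h
  set a : ℤ → ℕ := fun k => ⌊(x : ℝ) * 2 ^ (-k)⌋₊ with ha
  set a' : ℤ → ℕ := fun k => ⌊(y : ℝ) * 2 ^ (-k)⌋₊ with ha'
  have hpar : ∀ k : ℤ, a k % 2 = a' k % 2 := by
    intro k
    have := congrFun h k
    have h1 : (bmap x k : ℕ) = (bmap y k : ℕ) := by rw [this]
    rw [bmap_def, bmap_def] at h1
    exact h1
  obtain ⟨Nx, hNx⟩ := exists_high_zero x
  obtain ⟨Ny, hNy⟩ := exists_high_zero y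
  set N : ℤ := max Nx Ny with hNdef
  have hstepx : ∀ k : ℤ, a (k - 1) / 2 = a k := by
    intro k
    have h := floor_succ x (k - 1)
    rw [show (-(k - 1 + 1) : ℤ) = -k from by ring] at h
    exact h.symm
  have hstepy : ∀ k : ℤ, a' (k - 1) / 2 = a' k := by
    intro k
    have h := floor_succ y (k - 1)
    rw [show (-(k - 1 + 1) : ℤ) = -k from by ring] at h
    exact h.symm
  have hdown : ∀ j : ℕ, a (N - j) = a' (N - j) := by
    intro j
    induction j with
    | zero =>
      simp only [Nat.cast_zero, sub_zero]
      rw [ha, ha']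
      simp only []
      rw [hNx N (le_max_left _ _), hNy N (le_max_right _ _)]
    | succ j ih =>
      have hc : (N - (j+1 : ℕ) : ℤ) = (N - j) - 1 := by push_cast; ring
      rw [hc]
      have e1 := hstepx (N - (j:ℤ))
      have e2 := hstepy (N - (j:ℤ))
      have e3 := hpar ((N - (j:ℤ)) - 1)
      omega
  have haeq : ∀ k : ℤ, a k = a' k := by
    intro k
    rcases le_or_gt k N with hk | hk
    · have : k = N - ((N - k).toNat : ℤ) := by omega
      rw [this]; exact hdown _
    · rw [ha, ha']
      simp only []
      rw [hNx k (by omega), hNy k (by omega)]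
  have hxy : (x : ℝ) = (y : ℝ) := by
    have hle : ∀ u v : NNReal, (∀ k : ℤ, ⌊(u : ℝ) * 2 ^ (-k)⌋₊ = ⌊(v : ℝ) * 2 ^ (-k)⌋₊) →
        (u : ℝ) ≤ (v : ℝ) := by
      intro u v huv
      apply le_of_forall_pos_le_add
      intro ε hε
      obtain ⟨k, hk⟩ := small_zpow 1 one_pos ε hε
      rw [one_mul] at hk
      have h1 : (u : ℝ) < (⌊(u : ℝ) * 2 ^ (-k)⌋₊ + 1 : ℝ) * 2 ^ k := lt_floor_bound u k
      have h2 : (⌊(v : ℝ) * 2 ^ (-k)⌋₊ : ℝ) * 2 ^ k ≤ v := floor_mul_le v k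
      rw [huv k] at h1
      have : (⌊(v : ℝ) * 2 ^ (-k)⌋₊ + 1 : ℝ) * 2 ^ k
          = (⌊(v : ℝ) * 2 ^ (-k)⌋₊ : ℝ) * 2 ^ k + 2 ^ k := by ring
      rw [this] at h1
      linarith
    exact le_antisymm (hle x y haeq) (hle y x fun k => (haeq k).symm)
  exact NNReal.coe_injective hxy

noncomputable def ilv (m : ℕ) (x : Fin m → NNReal) : ℤ → Fin 2 := fun q =>
  if h : 0 < m then
    bmap (x ⟨(q % (m : ℤ)).toNat, by
      have hm' : (0 : ℤ) < (m : ℤ) := by exact_mod_cast h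
      have h1 := Int.emod_lt_of_pos q hm'
      have h2 := Int.emod_nonneg q hm'.ne'
      omega⟩) (q / (m : ℤ))
  else 0

lemma Bmap_eq_ilv (m : ℕ) (x : Fin m → NNReal) : Bmap m x = Phi (ilv m x) := rfl

lemma base_mod_div (m' : ℤ) (hm' : 0 < m') (k r : ℤ) (h0 : 0 ≤ r) (h1 : r < m') :
    (k * m' + r) % m' = r ∧ (k * m' + r) / m' = k := by
  constructor
  · rw [add_comm, Int.add_mul_emod_self_right]
    exact Int.emod_eq_of_lt h0 h1
  · rw [add_comm, Int.add_mul_ediv_right _ _ hm'.ne', Int.ediv_eq_zero_of_lt h0 h1, zero_add]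

lemma ilv_eval (m : ℕ) (hm : 0 < m) (x : Fin m → NNReal) (i : Fin m) (n : ℤ) :
    ilv m x (n * m + i.val) = bmap (x i) n := by
  have hm' : (0 : ℤ) < (m : ℤ) := by exact_mod_cast hm
  have hi0 : (0:ℤ) ≤ (i.val : ℤ) := by positivity
  have hilt : ((i.val : ℤ)) < (m:ℤ) := by exact_mod_cast i.isLt
  obtain ⟨hmod, hdiv⟩ := base_mod_div (m:ℤ) hm' n (i.val:ℤ) hi0 hilt
  have hfin : (((n * (m:ℤ) + (i.val:ℤ)) % (m:ℤ)).toNat) = i.val := by rw [hmod]; simp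
  have key : ∀ (h : (((n * (m:ℤ) + (i.val:ℤ)) % (m:ℤ)).toNat) < m),
      (⟨_, h⟩ : Fin m) = i := fun h => Fin.ext (by exact hfin)
  rw [ilv, dif_pos hm, key _, hdiv]

lemma ilv_mem_D (m : ℕ) (hm : 0 < m) (x : Fin m → NNReal) : ilv m x ∈ D := by
  have hm' : (0 : ℤ) < (m : ℤ) := by exact_mod_cast hm
  constructor
  · intro n
    set i : Fin m := ⟨(n % (m:ℤ)).toNat, by
      have h1 := Int.emod_lt_of_pos n hm'
      have h2 := Int.emod_nonneg n hm'.ne'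
      omega⟩ with hidef
    obtain ⟨k, hk, hk0⟩ := (bmap_mem_D (x i)).1 (n / (m:ℤ))
    refine ⟨k * m + (n % (m:ℤ)), ?_, ?_⟩
    · have h1 : k * (m:ℤ) ≤ (n / (m:ℤ)) * m := mul_le_mul_of_nonneg_right hk hm'.le
      have h2 : (m:ℤ) * (n / (m:ℤ)) + n % (m:ℤ) = n := Int.mul_ediv_add_emod n m
      have h3 : (n / (m:ℤ)) * m = (m:ℤ) * (n / (m:ℤ)) := mul_comm _ _
      omega
    · have h2 := Int.emod_nonneg n hm'.ne'
      have h3 := Int.emod_lt_of_pos n hm'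
      obtain ⟨hmod, hdiv⟩ := base_mod_div (m:ℤ) hm' k (n % (m:ℤ)) h2 h3
      rw [ilv, dif_pos hm]
      have : (⟨((k * m + n % (m:ℤ)) % (m:ℤ)).toNat, by
          have h4 := Int.emod_lt_of_pos (k * m + n % (m:ℤ)) hm'
          have h5 := Int.emod_nonneg (k * m + n % (m:ℤ)) hm'.ne'
          omega⟩ : Fin m) = i := by
        apply Fin.ext
        simp only [hidef, hmod]
      rw [this, hdiv]
      exact hk0
  · have hchoice : ∀ i : Fin m, ∃ Mi : ℤ, ∀ n ≥ Mi, bmap (x i) n = 0 :=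
      fun i => (bmap_mem_D (x i)).2
    choose Mf hMf using hchoice
    set B : ℕ := (Finset.univ : Finset (Fin m)).sup fun i => (Mf i).toNat with hB
    refine ⟨(m:ℤ) * B, fun q hq => ?_⟩
    rw [ilv, dif_pos hm]
    set i : Fin m := ⟨(q % (m:ℤ)).toNat, by
      have h1 := Int.emod_lt_of_pos q hm'
      have h2 := Int.emod_nonneg q hm'.ne'
      omega⟩
    apply hMf i
    have hMB : (Mf i).toNat ≤ B := Finset.le_sup (f := fun i => (Mf i).toNat) (Finset.mem_univ i)
    have h1 : (B:ℤ) ≤ q / (m:ℤ) := by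
      rw [Int.le_ediv_iff_mul_le hm']
      calc (B:ℤ) * m = m * B := mul_comm _ _
        _ ≤ q := hq
    have h2 : Mf i ≤ ((Mf i).toNat : ℤ) := Int.self_le_toNat _
    have h3 : ((Mf i).toNat : ℤ) ≤ (B:ℤ) := by exact_mod_cast hMB
    omega

lemma Bmap_injective (m : ℕ) (hm : 1 ≤ m) : Function.Injective (Bmap m) := by
  intro x y h
  have hm0 : 0 < m := hm
  rw [Bmap_eq_ilv, Bmap_eq_ilv] at h
  have hilv : ilv m x = ilv m y :=
    Phi_injOn _ (ilv_mem_D m hm0 x) _ (ilv_mem_D m hm0 y) h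
  funext i
  apply bmap_injective
  funext n
  rw [← ilv_eval m hm0 x i n, ← ilv_eval m hm0 y i n, hilv]

lemma bmap_measurable (n : ℤ) : Measurable (fun z : NNReal => bmap z n) := by
  have h1 : Measurable (fun z : NNReal => ⌊(z : ℝ) * 2 ^ (-n)⌋₊) :=
    Nat.measurable_floor.comp (measurable_coe_nnreal_real.mul_const _)
  exact (measurable_from_top (f := fun k : ℕ =>
    (⟨k % 2, Nat.mod_lt _ (by norm_num)⟩ : Fin 2))).comp h1

lemma Bmap_measurable (m : ℕ) : Measurable (Bmap m) := by
  have h1 : ∀ q : ℤ, Measurable (fun x : Fin m → NNReal => ilv m x q) := by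
    intro q
    by_cases hm : 0 < m
    · have : (fun x : Fin m → NNReal => ilv m x q) = (fun z : NNReal =>
          bmap z (q / (m:ℤ))) ∘ (fun x : Fin m → NNReal => x ⟨(q % (m : ℤ)).toNat, by
            have hm' : (0 : ℤ) < (m : ℤ) := by exact_mod_cast hm
            have h1 := Int.emod_lt_of_pos q hm'
            have h2 := Int.emod_nonneg q hm'.ne'
            omega⟩) := by
        funext x
        simp only [Function.comp_apply, ilv, dif_pos hm]
      rw [this]
      exact (bmap_measurable _).comp (measurable_pi_apply _)
    · have : (fun x : Fin m → NNReal => ilv m x q) = fun _ => 0 := by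
        funext x; simp only [ilv, dif_neg hm]
      rw [this]; exact measurable_const
  have h2 : ∀ q : ℤ, Measurable (fun x : Fin m → NNReal =>
      ((ilv m x q : ℕ) : ℝ≥0∞) * 2 ^ q) := by
    intro q
    exact ((measurable_from_top (f := fun c : Fin 2 => ((c : ℕ) : ℝ≥0∞))).comp
      (h1 q)).mul_const _
  have h3 : Measurable (fun x : Fin m → NNReal => Tsum2 (ilv m x)) :=
    Measurable.ennreal_tsum h2
  have h4 : Bmap m = fun x => (Tsum2 (ilv m x)).toNNReal := by
    funext x
    rw [Bmap_eq_ilv, Phi_eq]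
  rw [h4]
  exact ENNReal.measurable_toNNReal.comp h3

/-- The interleaving map `B` is injective and measurable; consequently it is a
measurable embedding: its range is a Borel set and the inverse on the range is
measurable. -/
theorem Bmap_injective_measurable_embedding (m : ℕ) (hm : 1 ≤ m) :
    Function.Injective (Bmap m) ∧
    Measurable (Bmap m) ∧
    MeasurableEmbedding (Bmap m) ∧
    MeasurableSet (Set.range (Bmap m)) ∧
    Measurable (fun y : Set.range (Bmap m) => Function.invFun (Bmap m) (y : NNReal)) := by
  have hinj := Bmap_injective m hm
  have hmeas := Bmap_measurable m
  have hemb : MeasurableEmbedding (Bmap m) := hmeas.measurableEmbedding hinj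
  refine ⟨hinj, hmeas, hemb, hemb.measurableSet_range, ?_⟩
  intro s hs
  have hset : (fun y : Set.range (Bmap m) => Function.invFun (Bmap m) (y : NNReal)) ⁻¹' s
      = Subtype.val ⁻¹' (Bmap m '' s) := by
    ext y
    simp only [Set.mem_preimage, Set.mem_image]
    constructor
    · intro h
      refine ⟨Function.invFun (Bmap m) (y : NNReal), h, ?_⟩
      obtain ⟨x, hx⟩ := y.2
      exact Function.invFun_eq ⟨x, hx⟩
    · rintro ⟨x, hx, hxy⟩
      have : Function.invFun (Bmap m) ((y : NNReal)) = x := by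
        rw [← hxy]
        exact Function.leftInverse_invFun hinj x
      rwa [this]
  rw [hset]
  exact measurable_subtype_coe (hemb.measurableSet_image' hs)
end

section
/- For every integer m ≥ 1, the complement ℝ≥0 ∖ B((ℝ≥0)^m) of the range of the interleaving map B is a Lebesgue-null subset of ℝ≥0. -/
open MeasureTheory
open scoped ENNReal NNReal

noncomputable def digit (k : ℤ) (t : ℝ) : ℕ := ⌊t * 2 ^ (-k)⌋₊ % 2

lemma digit_lt_two (k : ℤ) (t : ℝ) : digit k t < 2 := Nat.mod_lt _ (by norm_num)

lemma floor_rec (t : ℝ) (k : ℤ) :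
    ⌊t * 2 ^ (-k)⌋₊ = 2 * ⌊t * 2 ^ (-(k+1))⌋₊ + digit k t := by
  have h : t * 2 ^ (-(k+1)) = t * 2 ^ (-k) / (2:ℕ) := by
    push_cast
    rw [zpow_neg, zpow_neg, zpow_add₀ (by norm_num : (2:ℝ) ≠ 0)]
    ring
  rw [h, Nat.floor_div_natCast, digit]
  omega

lemma telescope (t : ℝ) (N M : ℤ) (h : N ≤ M) :
    ∑ k ∈ Finset.Ico N M, (digit k t : ℝ) * 2 ^ k
      = (⌊t * 2 ^ (-N)⌋₊ : ℝ) * 2 ^ N - (⌊t * 2 ^ (-M)⌋₊ : ℝ) * 2 ^ M := by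
  refine Int.le_induction (motive := fun M _ => ∑ k ∈ Finset.Ico N M, (digit k t : ℝ) * 2 ^ k
      = (⌊t * 2 ^ (-N)⌋₊ : ℝ) * 2 ^ N - (⌊t * 2 ^ (-M)⌋₊ : ℝ) * 2 ^ M) ?_ ?_ M h
  · simp
  · intro M hNM ih
    have hins : Finset.Ico N (M+1) = insert M (Finset.Ico N M) := by
      ext x; simp [Finset.mem_Ico]; omega
    rw [hins, Finset.sum_insert (by simp), ih, floor_rec t M]
    push_cast
    rw [zpow_add₀ (by norm_num : (2:ℝ) ≠ 0)]
    ring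

lemma floor_zpow_le (t : ℝ) (ht : 0 ≤ t) (k : ℤ) :
    (⌊t * 2 ^ (-k)⌋₊ : ℝ) * 2 ^ k ≤ t := by
  have h2 : (0:ℝ) < 2 ^ k := zpow_pos (by norm_num) k
  have := Nat.floor_le (by positivity : (0:ℝ) ≤ t * 2 ^ (-k))
  calc (⌊t * 2 ^ (-k)⌋₊ : ℝ) * 2 ^ k ≤ t * 2 ^ (-k) * 2 ^ k := by nlinarith
  _ = t := by rw [zpow_neg]; field_simp

lemma lt_floor_zpow (t : ℝ) (k : ℤ) :
    t - 2 ^ k < (⌊t * 2 ^ (-k)⌋₊ : ℝ) * 2 ^ k := by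
  have h2 : (0:ℝ) < 2 ^ k := zpow_pos (by norm_num) k
  have := Nat.lt_floor_add_one (t * 2 ^ (-k))
  have h3 : t * 2 ^ (-k) * 2 ^ k = t := by rw [zpow_neg]; field_simp
  nlinarith

lemma floor_eq_zero_of_lt (t : ℝ) (k : ℤ) (h : t < 2 ^ k) : ⌊t * 2 ^ (-k)⌋₊ = 0 := by
  have h2 : (0:ℝ) < 2 ^ k := zpow_pos (by norm_num) k
  apply Nat.floor_eq_zero.2
  rw [zpow_neg]
  calc t * (2 ^ k)⁻¹ < 2 ^ k * (2^k)⁻¹ := by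
        apply mul_lt_mul_of_pos_right h (by positivity)
  _ = 1 := by field_simp

lemma exists_zpow_gt (t : ℝ) : ∃ M : ℤ, 0 ≤ M ∧ t < 2 ^ M := by
  obtain ⟨n, hn⟩ := pow_unbounded_of_one_lt t (by norm_num : (1:ℝ) < 2)
  exact ⟨n, Int.ofNat_nonneg n, by rw [zpow_natCast]; exact hn⟩

lemma exists_zpow_lt (ε : ℝ) (hε : 0 < ε) : ∃ N : ℤ, (2:ℝ) ^ N < ε := by
  obtain ⟨n, hn⟩ := exists_pow_lt_of_lt_one hε (by norm_num : (1:ℝ)/2 < 1)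
  refine ⟨-n, ?_⟩
  rw [zpow_neg, zpow_natCast]
  calc ((2:ℝ)^n)⁻¹ = (1/2)^n := by rw [one_div, inv_pow]
  _ < ε := hn

/-- Lemma A core. -/
lemma hasSum_digit (t : ℝ) (ht : 0 ≤ t) : HasSum (fun k : ℤ => (digit k t : ℝ) * 2 ^ k) t := by
  obtain ⟨M, hM0, hM⟩ := exists_zpow_gt t
  apply hasSum_of_isLUB_of_nonneg
  · intro k; positivity
  constructor
  · rintro x ⟨F, rfl⟩
    rcases F.eq_empty_or_nonempty with rfl | hF
    · simpa using ht
    · have hsub : F ⊆ Finset.Ico (F.min' hF) (F.max' hF + 1) := by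
        intro k hk
        simp only [Finset.mem_Ico]
        exact ⟨F.min'_le k hk, by have := F.le_max' k hk; omega⟩
      calc ∑ k ∈ F, (digit k t : ℝ) * 2 ^ k
          ≤ ∑ k ∈ Finset.Ico (F.min' hF) (F.max' hF + 1), (digit k t : ℝ) * 2 ^ k := by
            apply Finset.sum_le_sum_of_subset_of_nonneg hsub
            intro i _ _; positivity
        _ = (⌊t * 2 ^ (-(F.min' hF))⌋₊ : ℝ) * 2 ^ (F.min' hF)
            - (⌊t * 2 ^ (-(F.max' hF + 1))⌋₊ : ℝ) * 2 ^ (F.max' hF + 1) := by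
            apply telescope
            have := F.min'_le _ (F.max'_mem hF); omega
        _ ≤ (⌊t * 2 ^ (-(F.min' hF))⌋₊ : ℝ) * 2 ^ (F.min' hF) := by
            have h2 : (0:ℝ) < 2 ^ (F.max' hF + 1) := zpow_pos (by norm_num) _
            have : (0:ℝ) ≤ (⌊t * 2 ^ (-(F.max' hF + 1))⌋₊ : ℝ) := Nat.cast_nonneg _
            nlinarith
        _ ≤ t := floor_zpow_le t ht _
  · rintro b hb
    by_contra hbt
    push_neg at hbt
    obtain ⟨N, hN⟩ := exists_zpow_lt (t - b) (by linarith)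
    set N' := min N M with hN'
    have h1 : (2:ℝ) ^ N' ≤ 2 ^ N := by
      apply zpow_le_zpow_right₀ (by norm_num) (min_le_left _ _)
    have hIB : ∑ k ∈ Finset.Ico N' M, (digit k t : ℝ) * 2 ^ k ≤ b := by
      apply hb; exact ⟨_, rfl⟩
    have hsum : ∑ k ∈ Finset.Ico N' M, (digit k t : ℝ) * 2 ^ k
        = (⌊t * 2 ^ (-N')⌋₊ : ℝ) * 2 ^ N' := by
      rw [telescope t N' M (min_le_right _ _), floor_eq_zero_of_lt t M hM]
      simp
    have := lt_floor_zpow t N'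
    rw [hsum] at hIB
    linarith

lemma bmap_val (x : NNReal) (n : ℤ) : ((bmap x n : Fin 2) : ℕ) = digit n (x : ℝ) := rfl

/-- Lemma A. -/
lemma Phi_bmap (x : NNReal) : Phi (bmap x) = x := by
  have h := hasSum_digit (x : ℝ) x.coe_nonneg
  have h2 : HasSum (fun k : ℤ => (((bmap x k : ℕ) : NNReal) * 2 ^ k : NNReal)) x := by
    rw [← NNReal.hasSum_coe]
    have he : (fun k : ℤ => ((((bmap x k : ℕ) : NNReal) * 2 ^ k : NNReal) : ℝ))
        = fun k => (digit k (x:ℝ) : ℝ) * 2 ^ k := by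
      funext k; push_cast [bmap_val]; ring
    rw [he]; exact h
  exact h2.tsum_eq

/-- geometric indicator sum -/
lemma hasSum_indicator_zpow (M : ℤ) :
    HasSum (fun k : ℤ => if k < M then (2:ℝ)^k else 0) (2 ^ M) := by
  have hinj : Function.Injective (fun i : ℕ => M - 1 - (i : ℤ)) := by
    intro a b hab; simpa using hab
  rw [← Function.Injective.hasSum_iff hinj]
  · have hgeo : HasSum (fun i : ℕ => (2:ℝ)^(M-1) * (1/2)^i) (2 ^ M) := by
      have := (hasSum_geometric_of_lt_one (by norm_num : (0:ℝ) ≤ 1/2) (by norm_num)).mul_left ((2:ℝ)^(M-1))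
      convert this using 1
      case e'_3 => exact rfl
      rw [show (1:ℝ) - 1/2 = 1/2 by norm_num]
      rw [zpow_sub₀ (by norm_num : (2:ℝ) ≠ 0)]
      norm_num
    convert hgeo using 2 with i
    simp only [Function.comp]
    rw [if_pos (by omega : M - 1 - (i:ℤ) < M)]
    rw [zpow_sub₀ (by norm_num : (2:ℝ) ≠ 0), zpow_sub₀ (by norm_num : (2:ℝ) ≠ 0), zpow_natCast]
    field_simp
    rw [← mul_pow]; norm_num
  · intro x hx
    rw [if_neg]
    intro hlt
    refine hx ⟨(M - 1 - x).toNat, ?_⟩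
    show M - 1 - ((M - 1 - x).toNat : ℤ) = x
    omega

lemma summable_fdig (ι : ℤ → Fin 2) (M : ℤ) (hM : ∀ n ≥ M, ι n = 0) :
    Summable (fun k : ℤ => ((ι k : ℕ) : ℝ) * 2 ^ k) := by
  refine Summable.of_nonneg_of_le (fun k => by positivity) ?_ (hasSum_indicator_zpow M).summable
  · intro k
    by_cases hk : k < M
    · rw [if_pos hk]
      have : ((ι k : ℕ) : ℝ) ≤ 1 := by
        have := (ι k).isLt; exact_mod_cast Nat.lt_succ_iff.mp this
      nlinarith [zpow_pos (by norm_num : (0:ℝ) < 2) k]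
    · rw [if_neg hk, hM k (by omega)]; simp

lemma fdig_le_indicator (ι : ℤ → Fin 2) (M : ℤ) (hM : ∀ n ≥ M, ι n = 0) (k : ℤ) :
    ((ι k : ℕ) : ℝ) * 2 ^ k ≤ (if k < M then (2:ℝ)^k else 0) := by
  by_cases hk : k < M
  · rw [if_pos hk]
    have : ((ι k : ℕ) : ℝ) ≤ 1 := by
      have := (ι k).isLt; exact_mod_cast Nat.lt_succ_iff.mp this
    nlinarith [zpow_pos (by norm_num : (0:ℝ) < 2) k]
  · rw [if_neg hk, hM k (by omega)]; simp

/-- Lemma B. -/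
lemma bmap_Phi_s3 (ι : ℤ → Fin 2) (hlow : ∀ n : ℤ, ∃ j ≤ n, ι j = 0)
    (M : ℤ) (hM : ∀ n ≥ M, ι n = 0) : bmap (Phi ι) = ι := by
  set f : ℤ → ℝ := fun k => ((ι k : ℕ) : ℝ) * 2 ^ k with hf
  have hfnn : ∀ k, 0 ≤ f k := fun k => by positivity
  have hsum : Summable f := summable_fdig ι M hM
  have hX : ((Phi ι : NNReal) : ℝ) = ∑' k, f k := by
    rw [Phi, NNReal.coe_tsum]
    push_cast
    rfl
  set X : ℝ := ∑' k, f k with hXdef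
  -- key bound for low part
  have keybound : ∀ n : ℤ, (∑' k : ℤ, if k < n then f k else 0) < 2 ^ n := by
    intro n
    obtain ⟨j, hj, hιj⟩ := hlow (n - 1)
    set G : ℤ → ℝ := fun k => if k < n ∧ k ≠ j then (2:ℝ)^k else 0 with hG
    set h : ℤ → ℝ := fun k => if k = j then (2:ℝ)^j else 0 with hh
    have hGsum : Summable G := by
      refine Summable.of_nonneg_of_le (fun k => by positivity) ?_ (hasSum_indicator_zpow n).summable
      intro k
      simp only [hG]
      split_ifs with h1 h2
      · exact le_rfl
      · exact absurd h1.1 h2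
      · positivity
      · exact le_rfl
    have hhsum : Summable h := summable_of_finite_support (by
      apply Set.Finite.subset (Set.finite_singleton j)
      intro k hk
      simp only [hh, Function.mem_support] at hk
      by_contra hne
      simp only [Set.mem_singleton_iff] at hne
      rw [if_neg hne] at hk
      exact hk rfl)
    have hsplit : (fun k : ℤ => if k < n then (2:ℝ)^k else 0) = fun k => G k + h k := by
      funext k
      by_cases hkj : k = j
      · subst hkj
        have hnot : ¬(k < n ∧ k ≠ k) := by tauto
        simp [hG, hh, hnot, (by omega : k < n)]
      · rw [hG, hh]
        simp only [if_neg hkj]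
        by_cases hk : k < n
        · rw [if_pos hk, if_pos ⟨hk, hkj⟩]; ring
        · rw [if_neg hk, if_neg (by tauto)]; ring
    have hGval : ∑' k, G k = 2 ^ n - 2 ^ j := by
      have h1 : ∑' k : ℤ, (if k < n then (2:ℝ)^k else 0) = 2 ^ n := (hasSum_indicator_zpow n).tsum_eq
      have h2 : ∑' k, h k = 2 ^ j := tsum_ite_eq j (fun _ => (2:ℝ)^j)
      have := Summable.tsum_add hGsum hhsum
      rw [← hsplit] at this
      rw [h1, h2] at this
      linarith
    have hle : (∑' k : ℤ, if k < n then f k else 0) ≤ ∑' k, G k := by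
      apply Summable.tsum_le_tsum _ _ hGsum
      · intro k
        by_cases hk : k < n
        · rw [if_pos hk]
          by_cases hkj : k = j
          · subst hkj
            rw [hf]
            simp only [hιj]
            simp [hG]
          · have h1 : ((ι k : ℕ) : ℝ) ≤ 1 := by
              have := (ι k).isLt; exact_mod_cast Nat.lt_succ_iff.mp this
            have h2 : (0:ℝ) < 2^k := zpow_pos (by norm_num) k
            show f k ≤ if k < n ∧ k ≠ j then (2:ℝ)^k else 0
            rw [if_pos ⟨hk, hkj⟩]
            simp only [hf]
            nlinarith
        · rw [if_neg hk]
          show (0:ℝ) ≤ if k < n ∧ k ≠ j then (2:ℝ)^k else 0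
          split_ifs <;> positivity
      · refine Summable.of_nonneg_of_le (fun k => ?_) (fun k => ?_) hsum
        · by_cases hk : k < n
          · rw [if_pos hk]; exact hfnn k
          · rw [if_neg hk]
        · by_cases hk : k < n
          · rw [if_pos hk]
          · rw [if_neg hk]; exact hfnn k
    have : (0:ℝ) < 2 ^ j := zpow_pos (by norm_num) j
    linarith [hle.trans_eq hGval]
  -- split of X and floor computation
  set A : ℤ → ℕ := fun n => ∑ k ∈ Finset.Ico n M, (ι k : ℕ) * 2 ^ ((k - n).toNat) with hA
  have hiA : ∀ n : ℤ, (∑ k ∈ Finset.Ico n M, f k) = (A n : ℝ) * 2 ^ n := by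
    intro n
    rw [hA]
    push_cast
    rw [Finset.sum_mul]
    apply Finset.sum_congr rfl
    intro k hk
    simp only [Finset.mem_Ico] at hk
    have h2 : ((2:ℝ) ^ ((k - n).toNat)) = 2 ^ ((k:ℤ) - n) := by
      rw [← zpow_natCast]; congr 1; omega
    simp only [hf]
    rw [h2, mul_assoc, ← zpow_add₀ (by norm_num : (2:ℝ) ≠ 0)]
    congr 2
    omega
  have hsplitX : ∀ n : ℤ, X = (∑' k : ℤ, if k < n then f k else 0) + (A n : ℝ) * 2 ^ n := by
    intro n
    have hg : Summable (fun k : ℤ => if k < n then f k else 0) := by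
      refine Summable.of_nonneg_of_le (fun k => ?_) (fun k => ?_) hsum
      · split_ifs; exacts [hfnn k, le_rfl]
      · split_ifs; exacts [le_rfl, hfnn k]
    have hh2 : Summable (fun k : ℤ => if k < n then 0 else f k) := by
      refine Summable.of_nonneg_of_le (fun k => ?_) (fun k => ?_) hsum
      · split_ifs; exacts [le_rfl, hfnn k]
      · split_ifs; exacts [hfnn k, le_rfl]
    have hfeq : f = fun k => (if k < n then f k else 0) + (if k < n then 0 else f k) := by
      funext k; split_ifs <;> ring
    have htail : (∑' k : ℤ, if k < n then 0 else f k) = ∑ k ∈ Finset.Ico n M, f k := by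
      have hrw : ∑ k ∈ Finset.Ico n M, f k = ∑ k ∈ Finset.Ico n M, (if k < n then 0 else f k) := by
        apply Finset.sum_congr rfl
        intro k hk
        simp only [Finset.mem_Ico] at hk
        rw [if_neg (by omega)]
      rw [hrw]
      apply tsum_eq_sum
      intro k hk
      simp only [Finset.mem_Ico, not_and, not_lt] at hk
      by_cases hkn : k < n
      · rw [if_pos hkn]
      · rw [if_neg hkn]
        simp only [hf]
        rw [hM k (by omega)]
        simp
    calc X = ∑' k, f k := hXdef
    _ = (∑' k : ℤ, if k < n then f k else 0) + (∑' k : ℤ, if k < n then 0 else f k) := by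
        rw [← Summable.tsum_add hg hh2, ← hfeq]
    _ = (∑' k : ℤ, if k < n then f k else 0) + (A n : ℝ) * 2 ^ n := by rw [htail, hiA]
  have hfloor : ∀ n : ℤ, ⌊X * 2 ^ (-n)⌋₊ = A n := by
    intro n
    have h2n : (0:ℝ) < 2 ^ n := zpow_pos (by norm_num) n
    have hL0 : 0 ≤ (∑' k : ℤ, if k < n then f k else 0) :=
      tsum_nonneg (fun k => by split_ifs; exacts [hfnn k, le_rfl])
    have hL1 := keybound n
    rw [Nat.floor_eq_iff]
    constructor
    · rw [hsplitX n]
      rw [add_mul]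
      have : (A n : ℝ) * 2 ^ n * 2 ^ (-n) = A n := by
        rw [mul_assoc, ← zpow_add₀ (by norm_num : (2:ℝ) ≠ 0)]
        simp
      rw [this]
      nlinarith [zpow_pos (by norm_num : (0:ℝ) < 2) (-n)]
    · rw [hsplitX n, add_mul]
      have heq : (A n : ℝ) * 2 ^ n * 2 ^ (-n) = A n := by
        rw [mul_assoc, ← zpow_add₀ (by norm_num : (2:ℝ) ≠ 0)]
        simp
      rw [heq]
      have hlt : (∑' k : ℤ, if k < n then f k else 0) * 2 ^ (-n) < 1 := by
        have h2 : (0:ℝ) < 2 ^ (-n) := zpow_pos (by norm_num) (-n)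
        have : (2:ℝ) ^ n * 2 ^ (-n) = 1 := by
          rw [← zpow_add₀ (by norm_num : (2:ℝ) ≠ 0)]; simp
        nlinarith
      linarith
    · rw [hsplitX n]
      positivity
  have hpar : ∀ n : ℤ, A n % 2 = (ι n : ℕ) := by
    intro n
    by_cases hn : n < M
    · have hins : Finset.Ico n M = insert n (Finset.Ico (n+1) M) := by
        ext x; simp only [Finset.mem_Ico, Finset.mem_insert]; omega
      have heven : ∑ k ∈ Finset.Ico (n+1) M, (ι k : ℕ) * 2 ^ ((k - n).toNat)
          = 2 * ∑ k ∈ Finset.Ico (n+1) M, (ι k : ℕ) * 2 ^ ((k - n - 1).toNat) := by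
        rw [Finset.mul_sum]
        apply Finset.sum_congr rfl
        intro k hk
        simp only [Finset.mem_Ico] at hk
        have : (k - n).toNat = (k - n - 1).toNat + 1 := by omega
        rw [this, pow_succ]
        ring
      have hval : A n = (ι n : ℕ) + 2 * ∑ k ∈ Finset.Ico (n+1) M, (ι k : ℕ) * 2 ^ ((k - n - 1).toNat) := by
        rw [hA]
        simp only
        rw [hins, Finset.sum_insert (by simp), heven]
        simp
      rw [hval]
      have := (ι n).isLt
      omega
    · have : Finset.Ico n M = ∅ := by
        apply Finset.Ico_eq_empty; omega
      rw [hA]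
      simp only [this, Finset.sum_empty]
      rw [hM n (by omega)]
      simp
  funext n
  apply Fin.ext
  show digit n ((Phi ι : NNReal) : ℝ) = (ι n : ℕ)
  rw [digit, hX, hfloor n, hpar n]


lemma bmap_eventually_zero (y : NNReal) : ∃ M : ℤ, 0 ≤ M ∧ ∀ n ≥ M, bmap y n = 0 := by
  obtain ⟨M, hM0, hM⟩ := exists_zpow_gt (y : ℝ)
  refine ⟨M, hM0, fun n hn => ?_⟩
  apply Fin.ext
  show ⌊(y:ℝ) * 2 ^ (-n)⌋₊ % 2 = 0
  rw [floor_eq_zero_of_lt _ _ (lt_of_lt_of_le hM (zpow_le_zpow_right₀ (by norm_num) hn))]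

lemma good_mem_range (m : ℕ) (hm : 1 ≤ m) (y : NNReal)
    (hg : ∀ i : ℕ, i < m → ∀ N : ℤ, ∃ n ≤ N, bmap y (n * m + i) = 0) :
    ∃ x : Fin m → NNReal, Bmap m x = y := by
  obtain ⟨M, hM0, hMz⟩ := bmap_eventually_zero y
  set ι : Fin m → ℤ → Fin 2 := fun i n => bmap y (n * m + (i : ℤ)) with hι
  set x : Fin m → NNReal := fun i => Phi (ι i) with hx
  have hb : ∀ i : Fin m, bmap (x i) = ι i := by
    intro i
    apply bmap_Phi_s3 (ι i) _ M
    · intro n hn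
      show bmap y (n * m + (i : ℤ)) = 0
      apply hMz
      have h1 : n ≤ n * m := le_mul_of_one_le_right (le_trans hM0 hn) (by exact_mod_cast hm)
      have h2 : (0:ℤ) ≤ (i : ℤ) := Int.ofNat_nonneg _
      omega
    · intro n
      obtain ⟨j, hj, hjz⟩ := hg i i.isLt n
      exact ⟨j, hj, hjz⟩
  refine ⟨x, ?_⟩
  rw [Bmap]
  have hfun : ∀ q : ℤ, ∀ (h : 0 < m),
      bmap (x ⟨(q % (m : ℤ)).toNat, by
        have hm' : (0 : ℤ) < (m : ℤ) := by exact_mod_cast h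
        have h1 := Int.emod_lt_of_pos q hm'
        have h2 := Int.emod_nonneg q hm'.ne'
        omega⟩) (q / (m : ℤ)) = bmap y q := by
    intro q h
    rw [hb]
    show bmap y ((q / (m:ℤ)) * m + (((q % (m:ℤ)).toNat : ℤ))) = bmap y q
    congr 1
    have hm' : (0 : ℤ) < (m : ℤ) := by exact_mod_cast h
    rw [Int.toNat_of_nonneg (Int.emod_nonneg q hm'.ne')]
    rw [mul_comm]
    exact Int.mul_ediv_add_emod q m
  have : (fun q : ℤ =>
      if h : 0 < m then
        bmap (x ⟨(q % (m : ℤ)).toNat, by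
          have hm' : (0 : ℤ) < (m : ℤ) := by exact_mod_cast h
          have h1 := Int.emod_lt_of_pos q hm'
          have h2 := Int.emod_nonneg q hm'.ne'
          omega⟩) (q / (m : ℤ))
      else 0) = bmap y := by
    funext q
    rw [dif_pos (by omega : 0 < m)]
    exact hfun q (by omega)
  rw [this, Phi_bmap]

lemma ofReal_two_zpow (M : ℤ) : ENNReal.ofReal ((2:ℝ)^M) = (2:ℝ≥0∞)^M := by
  have h1 : ((2:ℝ)^M) = (((2:NNReal)^M : NNReal) : ℝ) := by
    rw [NNReal.coe_zpow]; norm_num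
  rw [h1, ENNReal.ofReal_coe_nnreal, ENNReal.coe_zpow (by norm_num)]
  norm_num

lemma digit_add_nat_mul (z : ℝ) (hz : 0 ≤ z) (c : ℕ) (k l : ℤ) (hlk : l < k) :
    digit l (z + (c : ℝ) * 2 ^ k) = digit l z := by
  have h2l : (0:ℝ) < 2 ^ (-l) := zpow_pos (by norm_num) _
  have key : (z + (c : ℝ) * 2 ^ k) * 2 ^ (-l) = z * 2 ^ (-l) + (c * 2 ^ (k - l).toNat : ℕ) := by
    push_cast
    rw [add_mul, mul_assoc, ← zpow_natCast (2:ℝ) (k-l).toNat,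
      Int.toNat_of_nonneg (by omega : (0:ℤ) ≤ k - l), ← zpow_add₀ (by norm_num : (2:ℝ) ≠ 0)]
    congr 2
  rw [digit, digit, key, Nat.floor_add_natCast (by positivity)]
  have heven : (c * 2 ^ (k - l).toNat) % 2 = 0 := by
    have h : (k - l).toNat = ((k - l).toNat - 1) + 1 := by omega
    rw [h, pow_succ, ← mul_assoc, Nat.mul_mod_left]
  omega

def Eset (F : Finset ℤ) (M : ℤ) : Set ℝ :=
  {t | 0 ≤ t ∧ t < 2 ^ M ∧ ∀ k ∈ F, digit k t = 1}

lemma Eset_measure_le (r : ℕ) : ∀ (F : Finset ℤ) (M : ℤ), F.card = r → (∀ k ∈ F, k < M) →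
    volume (Eset F M) ≤ (2:ℝ≥0∞) ^ M * 2⁻¹ ^ r := by
  induction r with
  | zero =>
    intro F M _ _
    have hsub : Eset F M ⊆ Set.Ico 0 ((2:ℝ)^M) := fun t ht => ⟨ht.1, ht.2.1⟩
    calc volume (Eset F M) ≤ volume (Set.Ico 0 ((2:ℝ)^M)) := measure_mono hsub
    _ = ENNReal.ofReal ((2:ℝ)^M - 0) := Real.volume_Ico
    _ = (2:ℝ≥0∞) ^ M * 2⁻¹ ^ 0 := by rw [sub_zero, ofReal_two_zpow]; simp
  | succ r ih =>
    intro F M hcard hFM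
    have hne : F.Nonempty := Finset.card_pos.mp (by omega)
    set k := F.max' hne with hk
    have hkM : k < M := hFM k (F.max'_mem hne)
    set F' := F.erase k with hF'
    have hF'card : F'.card = r := by
      rw [hF', Finset.card_erase_of_mem (F.max'_mem hne), hcard]
      omega
    have hF'k : ∀ l ∈ F', l < k := by
      intro l hl
      have h1 := F.le_max' l (Finset.mem_of_mem_erase hl)
      have h2 := Finset.ne_of_mem_erase hl
      omega
    set a := (M - k - 1).toNat with ha
    have hcover : Eset F M ⊆ ⋃ j ∈ Finset.range (2 ^ a),
        (fun t => -((2 * (j:ℝ) + 1) * 2 ^ k) + t) ⁻¹' (Eset F' k) := by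
      intro t ht
      obtain ⟨ht0, htM, htd⟩ := ht
      set s := ⌊t * 2 ^ (-k)⌋₊ with hs
      have hodd : s % 2 = 1 := htd k (F.max'_mem hne)
      have h2k : (0:ℝ) < 2 ^ k := zpow_pos (by norm_num) _
      have hsle : (s:ℝ) * 2 ^ k ≤ t := floor_zpow_le t ht0 k
      have htlt : t < ((s:ℝ) + 1) * 2 ^ k := by
        have := Nat.lt_floor_add_one (t * 2 ^ (-k))
        have h3 : t * 2 ^ (-k) * 2 ^ k = t := by rw [zpow_neg]; field_simp
        nlinarith [zpow_pos (by norm_num : (0:ℝ) < 2) (-k)]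
      have hsbound : s < 2 ^ (a + 1) := by
        have h1 : (s:ℝ) < 2 ^ (M - k) := by
          have h2 : t * 2 ^ (-k) < 2 ^ M * 2 ^ (-k) := by
            apply mul_lt_mul_of_pos_right htM (zpow_pos (by norm_num) _)
          have h3 : (2:ℝ) ^ M * 2 ^ (-k) = 2 ^ (M - k) := by
            rw [← zpow_add₀ (by norm_num : (2:ℝ) ≠ 0)]; congr 1
          calc (s:ℝ) ≤ t * 2 ^ (-k) := Nat.floor_le (by positivity)
          _ < 2 ^ (M - k) := by rw [← h3]; exact h2
        have h4 : ((2:ℝ) ^ (M - k)) = ((2 ^ (a+1) : ℕ) : ℝ) := by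
          push_cast
          rw [← zpow_natCast (2:ℝ) (a+1)]
          congr 1
          omega
        rw [h4] at h1
        exact_mod_cast h1
      set j := s / 2 with hj
      have hsval : s = 2 * j + 1 := by omega
      have hjlt : j < 2 ^ a := by
        have : 2 ^ (a + 1) = 2 * 2 ^ a := by ring
        omega
      refine Set.mem_biUnion (Finset.mem_range.mpr hjlt) ?_
      show -((2 * (j:ℝ) + 1) * 2 ^ k) + t ∈ Eset F' k
      set z := -((2 * (j:ℝ) + 1) * 2 ^ k) + t with hz
      have hzs : z = t - (s:ℝ) * 2 ^ k := by
        rw [hz, hsval]; push_cast; ring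
      have hz0 : 0 ≤ z := by rw [hzs]; linarith
      have hzk : z < 2 ^ k := by rw [hzs]; nlinarith
      refine ⟨hz0, hzk, ?_⟩
      intro l hl
      have hlk := hF'k l hl
      have : digit l (z + (s : ℝ) * 2 ^ k) = digit l z := digit_add_nat_mul z hz0 s k l hlk
      rw [← this]
      have hteq : z + (s:ℝ) * 2 ^ k = t := by rw [hzs]; ring
      rw [hteq]
      exact htd l (Finset.mem_of_mem_erase hl)
    calc volume (Eset F M) ≤ ∑ j ∈ Finset.range (2 ^ a),
        volume ((fun t => -((2 * (j:ℝ) + 1) * 2 ^ k) + t) ⁻¹' (Eset F' k)) := by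
          exact (measure_mono hcover).trans (measure_biUnion_finset_le _ _)
    _ = ∑ _j ∈ Finset.range (2 ^ a), volume (Eset F' k) := by
          apply Finset.sum_congr rfl
          intro j _
          exact measure_preimage_add volume _ _
    _ = (2 ^ a : ℕ) * volume (Eset F' k) := by
          rw [Finset.sum_const, Finset.card_range, nsmul_eq_mul]
    _ ≤ (2 ^ a : ℕ) * ((2:ℝ≥0∞) ^ k * 2⁻¹ ^ r) := by
          apply mul_le_mul_right (ih F' k hF'card hF'k)
    _ = (2:ℝ≥0∞) ^ M * 2⁻¹ ^ (r + 1) := by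
          have h1 : ((2 ^ a : ℕ) : ℝ≥0∞) = (2:ℝ≥0∞) ^ (M - k - 1) := by
            push_cast
            rw [← zpow_natCast (2:ℝ≥0∞) a]
            congr 1
            omega
          rw [h1, ← mul_assoc, ← ENNReal.zpow_add (by norm_num) (by norm_num)]
          have h2 : M - k - 1 + k = M + (-1) := by omega
          rw [h2, ENNReal.zpow_add (by norm_num) (by norm_num)]
          rw [mul_assoc, pow_succ]
          congr 1
          rw [zpow_neg_one]
          ring

lemma SB_null (m : ℕ) (hm : 1 ≤ m) (i : ℕ) (N M : ℤ) :
    volume {t : ℝ | 0 ≤ t ∧ t < 2^M ∧ ∀ n : ℤ, n ≤ N → digit (n * (m:ℤ) + i) t = 1} = 0 := by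
  set M' : ℤ := max M (N * m + i + 1) with hM'
  set S := {t : ℝ | 0 ≤ t ∧ t < 2^M ∧ ∀ n : ℤ, n ≤ N → digit (n * (m:ℤ) + i) t = 1} with hS
  have hmZ : ((m:ℤ)) ≠ 0 := by
    have : (0:ℤ) < m := by exact_mod_cast hm
    omega
  have hbound : ∀ r : ℕ, volume S ≤ (2:ℝ≥0∞)^M' * 2⁻¹ ^ r := by
    intro r
    set F := (Finset.Icc (N - r + 1) N).image (fun n => n * (m:ℤ) + i) with hF
    have hinj : Function.Injective (fun n : ℤ => n * (m:ℤ) + i) := by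
      intro a b hab
      simp only [add_left_inj] at hab
      exact mul_right_cancel₀ hmZ hab
    have hcard : F.card = r := by
      rw [hF, Finset.card_image_of_injective _ hinj, Int.card_Icc]
      omega
    have hFM : ∀ k ∈ F, k < M' := by
      intro k hk
      simp only [hF, Finset.mem_image, Finset.mem_Icc] at hk
      obtain ⟨n, ⟨hn1, hn2⟩, rfl⟩ := hk
      have h1 : n * (m:ℤ) ≤ N * m :=
        mul_le_mul_of_nonneg_right hn2 (by positivity)
      have h2 : N * (m:ℤ) + i + 1 ≤ M' := le_max_right _ _
      omega
    have hsub : S ⊆ Eset F M' := by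
      intro t ht
      obtain ⟨ht0, htM, htd⟩ := ht
      refine ⟨ht0, lt_of_lt_of_le htM (zpow_le_zpow_right₀ (by norm_num) (le_max_left _ _)), ?_⟩
      intro k hk
      simp only [hF, Finset.mem_image, Finset.mem_Icc] at hk
      obtain ⟨n, ⟨hn1, hn2⟩, rfl⟩ := hk
      exact htd n hn2
    exact (measure_mono hsub).trans (Eset_measure_le r F M' hcard hFM)
  have htend : Filter.Tendsto (fun r : ℕ => (2:ℝ≥0∞)^M' * 2⁻¹ ^ r)
      Filter.atTop (nhds 0) := by
    have h1 : Filter.Tendsto (fun r : ℕ => (2⁻¹:ℝ≥0∞) ^ r) Filter.atTop (nhds 0) :=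
      ENNReal.tendsto_pow_atTop_nhds_zero_of_lt_one (by norm_num)
    have h2 : Filter.Tendsto (fun r : ℕ => (2:ℝ≥0∞)^M' * 2⁻¹ ^ r) Filter.atTop
        (nhds ((2:ℝ≥0∞)^M' * 0)) :=
      ENNReal.Tendsto.const_mul h1
        (Or.inr (ENNReal.zpow_lt_top (by norm_num) (by norm_num) M').ne)
    simpa using h2
  have : volume S ≤ 0 := ge_of_tendsto htend (Filter.Eventually.of_forall hbound)
  exact le_antisymm this zero_le

/-- The complement of the range of the interleaving map `B` inside `[0, ∞)` is a
Lebesgue-null set. -/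
theorem compl_range_Bmap_null (m : ℕ) (hm : 1 ≤ m) :
    MeasureTheory.volume
      (Set.Ici (0 : ℝ) \ (NNReal.toReal '' Set.range (Bmap m))) = 0 := by
  set U : Set ℝ := ⋃ (M : ℤ) (i : ℕ) (_ : i < m) (N : ℤ),
      {t : ℝ | 0 ≤ t ∧ t < 2^M ∧ ∀ n : ℤ, n ≤ N → digit (n * (m:ℤ) + i) t = 1} with hUdef
  have hU : volume U = 0 := by
    apply measure_iUnion_null; intro M
    apply measure_iUnion_null; intro i
    apply measure_iUnion_null; intro _
    apply measure_iUnion_null; intro N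
    exact SB_null m hm i N M
  have hsub : Set.Ici (0:ℝ) \ (NNReal.toReal '' Set.range (Bmap m)) ⊆ U := by
    intro t ht
    have ht0 : (0:ℝ) ≤ t := ht.1
    have htn := ht.2
    set y : NNReal := ⟨t, ht0⟩ with hy
    by_cases hg : ∀ i : ℕ, i < m → ∀ N : ℤ, ∃ n ≤ N, bmap y (n * m + i) = 0
    · obtain ⟨x, hx⟩ := good_mem_range m hm y hg
      exact absurd ⟨Bmap m x, ⟨x, rfl⟩, by rw [hx]; rfl⟩ htn
    · push_neg at hg
      obtain ⟨i, him, N, hN⟩ := hg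
      obtain ⟨M, hM0, hM⟩ := exists_zpow_gt t
      refine Set.mem_iUnion.mpr ⟨M, Set.mem_iUnion.mpr ⟨i, Set.mem_iUnion.mpr
        ⟨him, Set.mem_iUnion.mpr ⟨N, ?_⟩⟩⟩⟩
      refine ⟨ht0, hM, ?_⟩
      intro n hn
      have h := hN n hn
      have hv : digit (n * (m:ℤ) + i) t ≠ 0 := by
        intro h0
        apply h
        apply Fin.ext
        show digit (n * (m:ℤ) + i) ((y : NNReal) : ℝ) = 0
        exact h0
      have := digit_lt_two (n * (m:ℤ) + i) t
      omega
  exact measure_mono_null hsub hU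
end

section
/- For every integer m ≥ 1, the relation ≼ on (ℝ≥0)^m defined by x ≼ y if and only if B(x) ≤ B(y) is a total order: it is reflexive, transitive and antisymmetric, and any two elements of (ℝ≥0)^m are comparable. Moreover the set {(x, y) ∈ (ℝ≥0)^m × (ℝ≥0)^m : x ≼ y} is measurable with respect to the product Borel σ-algebra. -/
open MeasureTheory

open scoped ENNReal

namespace BmapAux

/-- Halving the argument divides the floor by two. -/
lemma floor_half (x : ℝ) (n : ℤ) :
    ⌊x * 2 ^ (-(n + 1))⌋₊ = ⌊x * 2 ^ (-n)⌋₊ / 2 := by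
  have h2 : x * 2 ^ (-(n + 1)) = x * 2 ^ (-n) / ((2 : ℕ) : ℝ) := by
    rw [show -(n + 1) = -n - 1 by ring, zpow_sub₀ (two_ne_zero), zpow_one]
    push_cast; ring
  rw [h2, Nat.floor_div_natCast]

lemma Icc_succ (a b : ℤ) (h : a - 1 ≤ b) :
    Finset.Icc a (b + 1) = insert (b + 1) (Finset.Icc a b) := by
  ext j; simp only [Finset.mem_Icc, Finset.mem_insert]; omega

lemma not_mem_Icc_top (a b : ℤ) : b + 1 ∉ Finset.Icc a b := by
  simp

/-- Telescoping identity for partial sums of binary digits. -/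
lemma telescope (x : ℝ) (a : ℤ) : ∀ b : ℤ, a - 1 ≤ b →
    ∑ n ∈ Finset.Icc a b, ((⌊x * 2 ^ (-n)⌋₊ % 2 : ℕ) : ℝ) * 2 ^ n
      = (⌊x * 2 ^ (-a)⌋₊ : ℝ) * 2 ^ a - (⌊x * 2 ^ (-(b + 1))⌋₊ : ℝ) * 2 ^ (b + 1) := by
  refine Int.le_induction ?_ ?_
  · rw [show a - 1 + 1 = a by ring]
    simp [Finset.Icc_eq_empty_of_lt (show a - 1 < a by omega)]
  · intro b hb ih
    rw [Icc_succ a b (by omega), Finset.sum_insert (not_mem_Icc_top a b), ih]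
    have hfh := floor_half x (b + 1)
    have hmd := Nat.mod_add_div (⌊x * 2 ^ (-(b + 1))⌋₊) 2
    have h2 : (2 : ℝ) ^ (b + 1 + 1) = 2 ^ (b + 1) * 2 := by
      rw [zpow_add₀ (two_ne_zero : (2 : ℝ) ≠ 0), zpow_one]
    have hc : ((⌊x * 2 ^ (-(b + 1))⌋₊ % 2 : ℕ) : ℝ) + 2 * ((⌊x * 2 ^ (-(b + 1))⌋₊ / 2 : ℕ) : ℝ)
        = ((⌊x * 2 ^ (-(b + 1))⌋₊ : ℕ) : ℝ) := by exact_mod_cast congrArg (Nat.cast : ℕ → ℝ) hmd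
    rw [hfh, h2]
    linear_combination (2 : ℝ) ^ (b + 1) * hc

lemma sum_geom_Icc (a : ℤ) : ∀ b : ℤ, a - 1 ≤ b →
    ∑ n ∈ Finset.Icc a b, (2 : ℝ) ^ n = 2 ^ (b + 1) - 2 ^ a := by
  refine Int.le_induction ?_ ?_
  · rw [show a - 1 + 1 = a by ring]
    simp [Finset.Icc_eq_empty_of_lt (show a - 1 < a by omega)]
  · intro b hb ih
    rw [Icc_succ a b (by omega), Finset.sum_insert (not_mem_Icc_top a b), ih,
      zpow_add₀ (two_ne_zero : (2 : ℝ) ≠ 0) (b + 1) 1, zpow_one]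
    ring

lemma floor_mul_le (x : ℝ) (hx : 0 ≤ x) (a : ℤ) :
    (⌊x * 2 ^ (-a)⌋₊ : ℝ) * 2 ^ a ≤ x := by
  have hp : (0:ℝ) < 2 ^ a := zpow_pos two_pos a
  have := Nat.floor_le (a := x * 2 ^ (-a)) (by positivity)
  calc (⌊x * 2 ^ (-a)⌋₊ : ℝ) * 2 ^ a ≤ (x * 2 ^ (-a)) * 2 ^ a := by nlinarith
    _ = x := by rw [mul_assoc, ← zpow_add₀ (two_ne_zero : (2:ℝ) ≠ 0)]; simp

lemma lt_floor_mul (x : ℝ) (hx : 0 ≤ x) (a : ℤ) :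
    x < (⌊x * 2 ^ (-a)⌋₊ : ℝ) * 2 ^ a + 2 ^ a := by
  have hp : (0:ℝ) < 2 ^ a := zpow_pos two_pos a
  have := Nat.lt_floor_add_one (x * 2 ^ (-a))
  have hx2 : (x * 2 ^ (-a)) * 2 ^ a = x := by
    rw [mul_assoc, ← zpow_add₀ (two_ne_zero : (2:ℝ) ≠ 0)]; simp
  nlinarith

lemma floor_eq_zero_of_lt {x : ℝ} (hx : 0 ≤ x) {n : ℤ} (h : x < 2 ^ n) :
    ⌊x * 2 ^ (-n)⌋₊ = 0 := by
  have hp : (0:ℝ) < 2 ^ n := zpow_pos two_pos n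
  have hpn : (0:ℝ) < 2 ^ (-n) := zpow_pos two_pos (-n)
  apply Nat.floor_eq_zero.2
  have : x * 2 ^ (-n) < 2 ^ n * 2 ^ (-n) := by nlinarith
  rw [← zpow_add₀ (two_ne_zero : (2:ℝ) ≠ 0)] at this
  simpa using this

lemma hasSum_geom (n : ℤ) :
    HasSum (fun j : ℤ => if j < n then (2 : ℝ) ^ j else 0) (2 ^ n) := by
  have hinj : Function.Injective (fun k : ℕ => n - 1 - (k : ℤ)) := by
    intro a b hab; simpa using hab
  have hsupp : ∀ j : ℤ, j ∉ Set.range (fun k : ℕ => n - 1 - (k : ℤ)) →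
      (if j < n then (2 : ℝ) ^ j else 0) = 0 := by
    intro j hj
    rw [if_neg]
    intro hjn
    exact hj ⟨(n - 1 - j).toNat, show n - 1 - ((n - 1 - j).toNat : ℤ) = j by omega⟩
  rw [← Function.Injective.hasSum_iff hinj hsupp]
  have h1 : HasSum (fun k : ℕ => (2:ℝ) ^ (n - 1) * 2⁻¹ ^ k) (2 ^ n) := by
    have := (hasSum_geometric_of_lt_one (by norm_num : (0:ℝ) ≤ 2⁻¹)
      (by norm_num : (2:ℝ)⁻¹ < 1)).mul_left ((2:ℝ) ^ (n - 1))
    convert this using 1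
    · rfl
    rw [show ((1:ℝ) - 2⁻¹)⁻¹ = 2 by norm_num, show (n:ℤ) = (n - 1) + 1 by ring]
    rw [zpow_add₀ (two_ne_zero : (2:ℝ) ≠ 0)]
    ring_nf
  convert h1 using 2 with k
  simp only [Function.comp]
  rw [if_pos (by omega : n - 1 - (k:ℤ) < n), show n - 1 - (k:ℤ) = (n-1) + (-(k:ℤ)) by ring,
    zpow_add₀ (two_ne_zero : (2:ℝ) ≠ 0), zpow_neg, zpow_natCast, inv_pow]

lemma exists_zpow_lt {ε : ℝ} (hε : 0 < ε) (c : ℤ) : ∃ a : ℤ, a ≤ c ∧ (2 : ℝ) ^ a < ε := by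
  obtain ⟨k, hk⟩ := exists_pow_lt_of_lt_one hε (by norm_num : (1:ℝ)/2 < 1)
  refine ⟨min (-(k:ℤ)) c, min_le_right _ _, lt_of_le_of_lt ?_ hk⟩
  have h1 : (2:ℝ) ^ (min (-(k:ℤ)) c) ≤ 2 ^ (-(k:ℤ)) :=
    zpow_le_zpow_right₀ (by norm_num) (min_le_left _ _)
  refine h1.trans_eq ?_
  rw [zpow_neg, zpow_natCast, one_div, inv_pow]

/-- Summability of functions supported below `M` and dominated by `2^j`. -/
lemma summable_dom (f : ℤ → ℝ) (M : ℤ) (h0 : ∀ j, 0 ≤ f j) (hb : ∀ j, f j ≤ 2 ^ j)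
    (hM : ∀ j, M ≤ j → f j = 0) : Summable f := by
  refine Summable.of_nonneg_of_le h0 (fun j => ?_) (hasSum_geom M).summable
  by_cases hj : j < M
  · rw [if_pos hj]; exact hb j
  · rw [if_neg hj, hM j (by omega)]

lemma summable_digits (x : ℝ) (hx : 0 ≤ x) :
    Summable (fun n : ℤ => ((⌊x * 2 ^ (-n)⌋₊ % 2 : ℕ) : ℝ) * 2 ^ n) := by
  obtain ⟨N, hN⟩ := pow_unbounded_of_one_lt x (one_lt_two : (1:ℝ) < 2)
  refine summable_dom _ (N : ℤ) (fun j => by positivity) (fun j => ?_) (fun j hj => ?_)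
  · have h1 : ((⌊x * 2 ^ (-j)⌋₊ % 2 : ℕ) : ℝ) ≤ 1 := by
      have := Nat.mod_lt (⌊x * 2 ^ (-j)⌋₊) (show 0 < 2 by norm_num)
      exact_mod_cast Nat.lt_succ_iff.mp this
    have hp : (0:ℝ) < 2 ^ j := zpow_pos two_pos j
    nlinarith
  · have hxN : x < 2 ^ (N : ℤ) := by rw [zpow_natCast]; exact hN
    have hxj : x < 2 ^ j :=
      hxN.trans_le (zpow_le_zpow_right₀ (by norm_num) hj)
    rw [floor_eq_zero_of_lt hx hxj]
    simp

lemma tsum_digits (x : ℝ) (hx : 0 ≤ x) :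
    ∑' n : ℤ, ((⌊x * 2 ^ (-n)⌋₊ % 2 : ℕ) : ℝ) * 2 ^ n = x := by
  have hs := summable_digits x hx
  obtain ⟨N, hN⟩ := pow_unbounded_of_one_lt x (one_lt_two : (1:ℝ) < 2)
  have hxN : x < 2 ^ (N : ℤ) := by rw [zpow_natCast]; exact hN
  have hnonneg : ∀ n : ℤ, 0 ≤ ((⌊x * 2 ^ (-n)⌋₊ % 2 : ℕ) : ℝ) * 2 ^ n := fun n => by positivity
  apply le_antisymm
  · -- tsum ≤ x : every finite partial sum is ≤ x
    refine Summable.tsum_le_of_sum_le hs (fun s => ?_)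
    rcases s.eq_empty_or_nonempty with rfl | hne
    · simpa using hx
    · set a := s.min' hne
      set b := s.max' hne
      have hab : a ≤ b := s.min'_le _ (s.max'_mem hne)
      have hsub : s ⊆ Finset.Icc a b := fun j hj =>
        Finset.mem_Icc.2 ⟨s.min'_le j hj, s.le_max' j hj⟩
      calc ∑ n ∈ s, ((⌊x * 2 ^ (-n)⌋₊ % 2 : ℕ) : ℝ) * 2 ^ n
          ≤ ∑ n ∈ Finset.Icc a b, ((⌊x * 2 ^ (-n)⌋₊ % 2 : ℕ) : ℝ) * 2 ^ n :=
            Finset.sum_le_sum_of_subset_of_nonneg hsub (fun j _ _ => hnonneg j)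
        _ = (⌊x * 2 ^ (-a)⌋₊ : ℝ) * 2 ^ a - (⌊x * 2 ^ (-(b + 1))⌋₊ : ℝ) * 2 ^ (b + 1) :=
            telescope x a b (by omega)
        _ ≤ (⌊x * 2 ^ (-a)⌋₊ : ℝ) * 2 ^ a := by
            have hp : (0:ℝ) < 2 ^ (b+1) := zpow_pos two_pos _
            nlinarith [Nat.cast_nonneg (α := ℝ) ⌊x * 2 ^ (-(b + 1))⌋₊]
        _ ≤ x := floor_mul_le x hx a
  · -- x ≤ tsum
    refine le_of_forall_pos_le_add (fun ε hε => ?_)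
    obtain ⟨a, haN, haε⟩ := exists_zpow_lt hε (N : ℤ)
    have hfl : ⌊x * 2 ^ (-((N : ℤ) + 1))⌋₊ = 0 :=
      floor_eq_zero_of_lt hx (hxN.trans (zpow_lt_zpow_right₀ (by norm_num) (by omega)))
    have hsum : ∑ n ∈ Finset.Icc a (N : ℤ), ((⌊x * 2 ^ (-n)⌋₊ % 2 : ℕ) : ℝ) * 2 ^ n
        = (⌊x * 2 ^ (-a)⌋₊ : ℝ) * 2 ^ a := by
      rw [telescope x a (N : ℤ) (by omega), hfl]
      simp
    have hle : ∑ n ∈ Finset.Icc a (N : ℤ), ((⌊x * 2 ^ (-n)⌋₊ % 2 : ℕ) : ℝ) * 2 ^ n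
        ≤ ∑' n : ℤ, ((⌊x * 2 ^ (-n)⌋₊ % 2 : ℕ) : ℝ) * 2 ^ n :=
      Summable.sum_le_tsum _ (fun j _ => hnonneg j) hs
    have hlow := lt_floor_mul x hx a
    rw [hsum] at hle
    linarith

lemma phi_bmap (x : NNReal) : Phi (bmap x) = x := by
  apply NNReal.coe_injective
  rw [Phi, NNReal.coe_tsum]
  rw [← tsum_digits (x : ℝ) x.2]
  refine tsum_congr fun n => ?_
  push_cast [bmap]
  norm_cast

lemma bmap_mem_D (x : NNReal) : bmap x ∈ D := by
  have hx : (0:ℝ) ≤ (x:ℝ) := x.2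
  constructor
  · intro n
    by_contra hc
    push_neg at hc
    have hd : ∀ r : ℤ, r ≤ n → ⌊(x:ℝ) * 2 ^ (-r)⌋₊ % 2 = 1 := by
      intro r hr
      have hne := hc r hr
      have hlt : ⌊(x:ℝ) * 2 ^ (-r)⌋₊ % 2 < 2 := Nat.mod_lt _ (by norm_num)
      have h0 : ⌊(x:ℝ) * 2 ^ (-r)⌋₊ % 2 ≠ 0 := by
        intro h0
        exact hne (Fin.ext h0)
      omega
    have hup := lt_floor_mul (x:ℝ) hx (n + 1)
    have hε : 0 < (⌊(x:ℝ) * 2 ^ (-(n+1))⌋₊ : ℝ) * 2 ^ (n+1) + 2 ^ (n+1) - (x:ℝ) := by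
      linarith
    obtain ⟨a, han, ha⟩ := exists_zpow_lt hε n
    have h1 : ∑ r ∈ Finset.Icc a n, ((⌊(x:ℝ) * 2 ^ (-r)⌋₊ % 2 : ℕ) : ℝ) * 2 ^ r
        = 2 ^ (n+1) - 2 ^ a := by
      rw [← sum_geom_Icc a n (by omega)]
      refine Finset.sum_congr rfl fun r hr => ?_
      rw [hd r (Finset.mem_Icc.mp hr).2]
      norm_num
    have h2 := telescope (x:ℝ) a n (by omega)
    have h3 := floor_mul_le (x:ℝ) hx a
    rw [h1] at h2
    linarith
  · obtain ⟨N, hN⟩ := pow_unbounded_of_one_lt (x:ℝ) (one_lt_two : (1:ℝ) < 2)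
    refine ⟨(N : ℤ), fun n hn => ?_⟩
    have hxn : (x:ℝ) < 2 ^ n := by
      calc (x:ℝ) < 2 ^ (N:ℤ) := by rw [zpow_natCast]; exact hN
        _ ≤ 2 ^ n := zpow_le_zpow_right₀ (by norm_num) hn
    apply Fin.ext
    show ⌊(x:ℝ) * 2 ^ (-n)⌋₊ % 2 = (0 : Fin 2).val
    rw [floor_eq_zero_of_lt hx hxn]
    rfl

lemma coePhi (ι : ℤ → Fin 2) : ((Phi ι : NNReal) : ℝ) = ∑' n : ℤ, ((ι n : ℕ) : ℝ) * 2 ^ n := by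
  rw [Phi, NNReal.coe_tsum]
  refine tsum_congr fun n => ?_
  push_cast
  norm_cast

lemma summable_seq {ι : ℤ → Fin 2} (M : ℤ) (hM : ∀ n ≥ M, ι n = 0) :
    Summable (fun n : ℤ => ((ι n : ℕ) : ℝ) * 2 ^ n) := by
  refine summable_dom _ M (fun j => by positivity) (fun j => ?_) (fun j hj => ?_)
  · have h1 : ((ι j : ℕ) : ℝ) ≤ 1 := by
      have := (ι j).isLt
      exact_mod_cast Nat.lt_succ_iff.mp this
    have hp : (0:ℝ) < 2 ^ j := zpow_pos two_pos j
    nlinarith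
  · rw [hM j hj]
    simp

lemma phi_inj_core {ι κ : ℤ → Fin 2} (hι2 : ∃ M, ∀ n ≥ M, ι n = 0)
    (hκ2 : ∃ M, ∀ n ≥ M, κ n = 0) (hκ1 : ∀ n : ℤ, ∃ m ≤ n, κ m = 0) (n : ℤ)
    (hgt : ∀ j > n, ι j = κ j) (hιn : ι n = 1) (hκn : κ n = 0)
    (hr : ∑' j : ℤ, ((ι j : ℕ) : ℝ) * 2 ^ j = ∑' j : ℤ, ((κ j : ℕ) : ℝ) * 2 ^ j) : False := by
  obtain ⟨Mι, hMι⟩ := hι2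
  obtain ⟨Mκ, hMκ⟩ := hκ2
  have s1 := summable_seq Mι hMι
  have s2 := summable_seq Mκ hMκ
  set F : ℤ → ℝ := fun j => ((ι j : ℕ) : ℝ) * 2 ^ j - ((κ j : ℕ) : ℝ) * 2 ^ j with hF
  have sF : Summable F := s1.sub s2
  have htF : ∑' j, F j = 0 := by
    rw [hF]
    rw [Summable.tsum_sub s1 s2, hr, sub_self]
  have hFn : F n = 2 ^ n := by rw [hF]; simp [hιn, hκn]
  obtain ⟨m, hmn, hκm⟩ := hκ1 (n - 1)
  set G : ℤ → ℝ := fun j => if j = n then 0 else F j with hG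
  have sG : Summable G := by
    refine (sF.update n 0).congr fun j => ?_
    rw [Function.update_apply]
  have htG : ∑' j, G j = -(2 ^ n) := by
    have h0 := Summable.tsum_eq_add_tsum_ite sF n
    rw [htF, hFn] at h0
    rw [hG]
    linarith [h0]
  have hdig : ∀ (τ : ℤ → Fin 2) (j : ℤ), ((τ j : ℕ) : ℝ) ≤ 1 := by
    intro τ j
    have := (τ j).isLt
    exact_mod_cast Nat.lt_succ_iff.mp this
  have hdig0 : ∀ (τ : ℤ → Fin 2) (j : ℤ), (0:ℝ) ≤ ((τ j : ℕ) : ℝ) := fun τ j => by positivity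
  have Sh : HasSum (fun j : ℤ => if j < n ∧ j ≠ m then (2:ℝ) ^ j else 0) (2 ^ n - 2 ^ m) := by
    have e1 := hasSum_geom n
    have e2 : HasSum (fun j : ℤ => if j = m then (2:ℝ) ^ m else 0) (2 ^ m) :=
      hasSum_ite_eq m ((2:ℝ) ^ m)
    have e3 := e1.sub e2
    refine HasSum.congr_fun e3 fun j => ?_
    by_cases h1 : j = m
    · have hmln : m < n := by omega
      simp [h1, hmln]
    · by_cases h2 : j < n <;> simp [h1, h2]
  have hbound : ∀ j : ℤ, -G j ≤ (if j < n ∧ j ≠ m then (2:ℝ) ^ j else 0) := by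
    intro j
    have hp : (0:ℝ) < 2 ^ j := zpow_pos two_pos j
    have h1 := hdig ι j
    have h2 := hdig κ j
    have h3 := hdig0 ι j
    have h4 := hdig0 κ j
    simp only [hG, hF]
    by_cases hjn : j = n
    · simp [hjn]
    · rw [if_neg hjn]
      by_cases hjgt : n < j
      · have heq : ((ι j : ℕ) : ℝ) = ((κ j : ℕ) : ℝ) := by rw [hgt j hjgt]
        rw [if_neg (fun hh => absurd hh.1 (by omega))]
        nlinarith
      · have hjlt : j < n := by omega
        by_cases hjm : j = m
        · have hκ0 : ((κ j : ℕ) : ℝ) = 0 := by rw [hjm, hκm]; simp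
          rw [if_neg (fun hh => hh.2 hjm)]
          nlinarith
        · rw [if_pos ⟨hjlt, hjm⟩]
          nlinarith
  have hfin : (2:ℝ) ^ n ≤ 2 ^ n - 2 ^ m := by
    have hle := Summable.tsum_le_tsum hbound sG.neg Sh.summable
    rw [tsum_neg, htG, neg_neg, Sh.tsum_eq] at hle
    exact hle
  have : (0:ℝ) < 2 ^ m := zpow_pos two_pos m
  linarith

/-- `Φ` is injective on `D` (real-sum version). -/
lemma phi_inj {ι κ : ℤ → Fin 2} (hι : ι ∈ D) (hκ : κ ∈ D)
    (h : Phi ι = Phi κ) : ι = κ := by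
  have hr : ∑' j : ℤ, ((ι j : ℕ) : ℝ) * 2 ^ j = ∑' j : ℤ, ((κ j : ℕ) : ℝ) * 2 ^ j := by
    rw [← coePhi, ← coePhi, h]
  by_contra hne
  have hex : ∃ j : ℤ, ι j ≠ κ j := by
    by_contra hall
    push_neg at hall
    exact hne (funext hall)
  obtain ⟨Mι, hMι⟩ := hι.2
  obtain ⟨Mκ, hMκ⟩ := hκ.2
  have hbdd : ∃ b : ℤ, ∀ z : ℤ, ι z ≠ κ z → z ≤ b := by
    refine ⟨max Mι Mκ, fun z hz => ?_⟩
    by_contra hzb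
    push_neg at hzb
    exact hz (by rw [hMι z (by omega), hMκ z (by omega)])
  obtain ⟨n, hn, hmax⟩ := Int.exists_greatest_of_bdd (P := fun j => ι j ≠ κ j)
    (by obtain ⟨b, hb⟩ := hbdd; exact ⟨b, hb⟩) hex
  have hgt : ∀ j > n, ι j = κ j := by
    intro j hj
    by_contra hj2
    have := hmax j hj2
    omega
  have hcases : ι n = 1 ∧ κ n = 0 ∨ ι n = 0 ∧ κ n = 1 := by
    have : ∀ a b : Fin 2, a ≠ b → a = 1 ∧ b = 0 ∨ a = 0 ∧ b = 1 := by decide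
    exact this _ _ hn
  rcases hcases with ⟨h1, h0⟩ | ⟨h0, h1⟩
  · exact phi_inj_core hι.2 hκ.2 hκ.1 n hgt h1 h0 hr
  · exact phi_inj_core hκ.2 hι.2 hι.1 n (fun j hj => (hgt j hj).symm) h1 h0 hr.symm


/-- The interleaved digit sequence underlying `Bmap`. -/
noncomputable def seqd (m : ℕ) (x : Fin m → NNReal) : ℤ → Fin 2 := fun q : ℤ =>
  if h : 0 < m then
    bmap (x ⟨(q % (m : ℤ)).toNat, by
      have hm' : (0 : ℤ) < (m : ℤ) := by exact_mod_cast h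
      have h1 := Int.emod_lt_of_pos q hm'
      have h2 := Int.emod_nonneg q hm'.ne'
      omega⟩) (q / (m : ℤ))
  else 0

lemma Bmap_eq (m : ℕ) (x : Fin m → NNReal) : Bmap m x = Phi (seqd m x) := rfl

lemma seqd_apply {m : ℕ} (hm : 0 < m) (x : Fin m → NNReal) (q : ℤ) :
    seqd m x q = bmap (x ⟨(q % (m : ℤ)).toNat, by
      have hm' : (0 : ℤ) < (m : ℤ) := by exact_mod_cast hm
      have h1 := Int.emod_lt_of_pos q hm'
      have h2 := Int.emod_nonneg q hm'.ne'
      omega⟩) (q / (m : ℤ)) := by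
  rw [seqd, dif_pos hm]

lemma seqd_eval {m : ℕ} (hm : 0 < m) (x : Fin m → NNReal) (i : Fin m) (k : ℤ) :
    seqd m x ((i : ℤ) + (m : ℤ) * k) = bmap (x i) k := by
  have hm' : (0 : ℤ) < (m : ℤ) := by exact_mod_cast hm
  have hi0 : (0 : ℤ) ≤ (i : ℤ) := Int.ofNat_nonneg _
  have him : (i : ℤ) < (m : ℤ) := by exact_mod_cast i.isLt
  have hmod : ((i : ℤ) + (m : ℤ) * k) % (m : ℤ) = (i : ℤ) := by
    rw [Int.add_mul_emod_self_left, Int.emod_eq_of_lt hi0 him]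
  have hdiv : ((i : ℤ) + (m : ℤ) * k) / (m : ℤ) = k := by
    rw [Int.add_mul_ediv_left _ _ hm'.ne', Int.ediv_eq_zero_of_lt hi0 him, zero_add]
  rw [seqd_apply hm, hdiv]
  congr 1
  apply congrArg
  apply Fin.ext
  show ((((i : ℤ) + (m : ℤ) * k) % (m : ℤ)).toNat) = (i : ℕ)
  rw [hmod]
  simp

lemma seqd_mem_D {m : ℕ} (hm : 0 < m) (x : Fin m → NNReal) : seqd m x ∈ D := by
  have hm' : (0 : ℤ) < (m : ℤ) := by exact_mod_cast hm
  haveI : Nonempty (Fin m) := ⟨⟨0, hm⟩⟩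
  constructor
  · -- infinitely many zeros to the left
    intro n
    set i : Fin m := ⟨(n % (m : ℤ)).toNat, by
      have h1 := Int.emod_lt_of_pos n hm'
      have h2 := Int.emod_nonneg n hm'.ne'
      omega⟩ with hi
    obtain ⟨k, hk, hk0⟩ := (bmap_mem_D (x i)).1 (n / (m : ℤ))
    refine ⟨(i : ℤ) + (m : ℤ) * k, ?_, ?_⟩
    · have h2 := Int.emod_nonneg n hm'.ne'
      have hiv : (i : ℤ) = n % (m : ℤ) := by
        simp [hi]
        omega
      have := Int.emod_add_mul_ediv n (m : ℤ)
      have hmul : (m : ℤ) * k ≤ (m : ℤ) * (n / (m : ℤ)) :=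
        mul_le_mul_of_nonneg_left hk (le_of_lt hm')
      omega
    · rw [seqd_eval hm, hk0]
  · -- eventually zero to the right
    choose M hM using fun i => (bmap_mem_D (x i)).2
    obtain ⟨N, hN⟩ := Finset.exists_le (Finset.univ.image M)
    refine ⟨(m : ℤ) * N, fun q hq => ?_⟩
    rw [seqd_apply hm]
    set i : Fin m := ⟨(q % (m : ℤ)).toNat, by
      have h1 := Int.emod_lt_of_pos q hm'
      have h2 := Int.emod_nonneg q hm'.ne'
      omega⟩
    apply hM i
    have h1 : M i ≤ N := hN (M i) (Finset.mem_image_of_mem M (Finset.mem_univ i))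
    have h2 : N ≤ q / (m : ℤ) := by
      rw [Int.le_ediv_iff_mul_le hm']
      linarith [hq]
    omega

lemma Bmap_inj {m : ℕ} (hm : 0 < m) {x y : Fin m → NNReal} (h : Bmap m x = Bmap m y) :
    x = y := by
  rw [Bmap_eq, Bmap_eq] at h
  have hseq := phi_inj (seqd_mem_D hm x) (seqd_mem_D hm y) h
  funext i
  have hb : bmap (x i) = bmap (y i) := by
    funext k
    rw [← seqd_eval hm x i k, ← seqd_eval hm y i k, hseq]
  calc x i = Phi (bmap (x i)) := (phi_bmap (x i)).symm
    _ = Phi (bmap (y i)) := by rw [hb]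
    _ = y i := phi_bmap (y i)

lemma seqd_summable {m : ℕ} (hm : 0 < m) (x : Fin m → NNReal) :
    Summable (fun q : ℤ => ((seqd m x q : ℕ) : NNReal) * 2 ^ q) := by
  rw [← NNReal.summable_coe]
  obtain ⟨M, hM⟩ := (seqd_mem_D hm x).2
  have := summable_seq M hM
  refine this.congr fun q => ?_
  push_cast
  norm_cast

lemma coe_Bmap {m : ℕ} (hm : 0 < m) (x : Fin m → NNReal) :
    ((Bmap m x : NNReal) : ℝ≥0∞) = ∑' q : ℤ, ((seqd m x q : ℕ) : ℝ≥0∞) * 2 ^ q := by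
  rw [Bmap_eq, Phi, ENNReal.coe_tsum (seqd_summable hm x)]
  refine tsum_congr fun q => ?_
  rw [ENNReal.coe_mul, ENNReal.coe_zpow (two_ne_zero)]
  norm_cast

lemma Bmap_measurable {m : ℕ} (hm : 0 < m) :
    Measurable (fun x : Fin m → NNReal => ((Bmap m x : NNReal) : ℝ≥0∞)) := by
  have : (fun x : Fin m → NNReal => ((Bmap m x : NNReal) : ℝ≥0∞))
      = fun x => ∑' q : ℤ, ((seqd m x q : ℕ) : ℝ≥0∞) * 2 ^ q := by
    funext x; exact coe_Bmap hm x
  rw [this]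
  refine Measurable.ennreal_tsum fun q => ?_
  refine Measurable.mul_const ?_ _
  set i : Fin m := ⟨(q % (m : ℤ)).toNat, by
    have hm' : (0 : ℤ) < (m : ℤ) := by exact_mod_cast hm
    have h1 := Int.emod_lt_of_pos q hm'
    have h2 := Int.emod_nonneg q hm'.ne'
    omega⟩ with hidef
  have heq : (fun x : Fin m → NNReal => ((seqd m x q : ℕ) : ℝ≥0∞))
      = fun x => ((⌊((x i : NNReal) : ℝ) * 2 ^ (-(q / (m : ℤ)))⌋₊ % 2 : ℕ) : ℝ≥0∞) := by
    funext x
    rw [seqd_apply hm]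
    rfl
  rw [heq]
  have h1 : Measurable fun x : Fin m → NNReal => ((x i : NNReal) : ℝ) :=
    measurable_coe_nnreal_real.comp (measurable_pi_apply i)
  have h2 : Measurable fun x : Fin m → NNReal =>
      ⌊((x i : NNReal) : ℝ) * 2 ^ (-(q / (m : ℤ)))⌋₊ % 2 :=
    (measurable_from_top (f := fun n : ℕ => n % 2)).comp ((h1.mul_const _).nat_floor)
  exact (measurable_from_top (f := fun n : ℕ => (n : ℝ≥0∞))).comp h2

end BmapAux

/-- The relation `x ≼ y ↔ B(x) ≤ B(y)` is a measurable total order on `(ℝ≥0)^m`. -/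
theorem Bmap_order_total_measurable (m : ℕ) (hm : 1 ≤ m) :
    Reflexive (fun x y : Fin m → NNReal => Bmap m x ≤ Bmap m y) ∧
    Transitive (fun x y : Fin m → NNReal => Bmap m x ≤ Bmap m y) ∧
    AntiSymmetric (fun x y : Fin m → NNReal => Bmap m x ≤ Bmap m y) ∧
    (∀ x y : Fin m → NNReal, Bmap m x ≤ Bmap m y ∨ Bmap m y ≤ Bmap m x) ∧
    MeasurableSet {p : (Fin m → NNReal) × (Fin m → NNReal) | Bmap m p.1 ≤ Bmap m p.2} := by
  have hm0 : 0 < m := hm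
  refine ⟨fun x => le_refl _, fun x y z h1 h2 => h1.trans h2, ?_, fun x y => le_total _ _, ?_⟩
  · intro x y h1 h2
    exact BmapAux.Bmap_inj hm0 (le_antisymm h1 h2)
  · have hset : {p : (Fin m → NNReal) × (Fin m → NNReal) | Bmap m p.1 ≤ Bmap m p.2}
        = {p : (Fin m → NNReal) × (Fin m → NNReal) |
            ((Bmap m p.1 : NNReal) : ℝ≥0∞) ≤ ((Bmap m p.2 : NNReal) : ℝ≥0∞)} := by
      ext p
      simp [ENNReal.coe_le_coe]
    rw [hset]
    exact measurableSet_le ((BmapAux.Bmap_measurable hm0).comp measurable_fst)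
      ((BmapAux.Bmap_measurable hm0).comp measurable_snd)
end

section
/- Let (Ω, 𝓕, P) be a probability space and let X, Y : Ω → ℕ be random variables such that X, Y and the product X·Y are integrable. Then |E[X·Y] − E[X]·E[Y]| ≤ ∑_{m=1}^∞ ∑_{n=1}^∞ |P(X ≥ m and Y ≥ n) − P(X ≥ m)·P(Y ≥ n)|. -/
open MeasureTheory

private lemma natCast_eq_tsum_ite (n : ℕ) :
    (n : ENNReal) = ∑' m : ℕ, if m + 1 ≤ n then (1 : ENNReal) else 0 := by
  have h0 : ∀ m ∉ Finset.range n, (if m + 1 ≤ n then (1 : ENNReal) else 0) = 0 := by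
    intro m hm
    rw [Finset.mem_range, not_lt] at hm
    rw [if_neg (by omega)]
  rw [tsum_eq_sum h0]
  have h1 : ∀ m ∈ Finset.range n, (if m + 1 ≤ n then (1 : ENNReal) else 0) = 1 := by
    intro m hm
    rw [Finset.mem_range] at hm
    rw [if_pos (Nat.succ_le_of_lt hm)]
  rw [Finset.sum_congr rfl h1, Finset.sum_const, Finset.card_range, nsmul_eq_mul, mul_one]

private lemma lintegral_ite_one {Ω : Type*} [MeasurableSpace Ω] (P : Measure Ω)
    (pred : Ω → Prop) [DecidablePred pred] (hs : MeasurableSet {ω | pred ω}) :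
    ∫⁻ ω, (if pred ω then (1 : ENNReal) else 0) ∂P = P {ω | pred ω} := by
  rw [← lintegral_indicator_one hs]
  congr 1
  ext ω
  by_cases h : pred ω <;> simp [h]

private lemma meas_set_ge {Ω : Type*} [MeasurableSpace Ω] {X : Ω → ℕ}
    (hXm : Measurable X) (m : ℕ) : MeasurableSet {ω | m + 1 ≤ X ω} :=
  hXm measurableSet_Ici

private lemma lintegral_natCast_eq_tsum {Ω : Type*} [MeasurableSpace Ω] (P : Measure Ω)
    {X : Ω → ℕ} (hXm : Measurable X) :
    ∫⁻ ω, (X ω : ENNReal) ∂P = ∑' m : ℕ, P {ω | m + 1 ≤ X ω} := by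
  have h1 : ∀ ω, (X ω : ENNReal) = ∑' m : ℕ, if m + 1 ≤ X ω then (1 : ENNReal) else 0 :=
    fun ω => natCast_eq_tsum_ite (X ω)
  simp_rw [h1]
  rw [lintegral_tsum (fun m => (Measurable.ite (meas_set_ge hXm m)
    measurable_const measurable_const).aemeasurable)]
  exact tsum_congr fun m => lintegral_ite_one P (fun ω => m + 1 ≤ X ω) (meas_set_ge hXm m)

private lemma lintegral_mul_natCast_eq_tsum {Ω : Type*} [MeasurableSpace Ω] (P : Measure Ω)
    {X Y : Ω → ℕ} (hXm : Measurable X) (hYm : Measurable Y) :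
    ∫⁻ ω, (X ω : ENNReal) * (Y ω : ENNReal) ∂P =
      ∑' z : ℕ × ℕ, P {ω | z.1 + 1 ≤ X ω ∧ z.2 + 1 ≤ Y ω} := by
  have h1 : ∀ ω, (X ω : ENNReal) * (Y ω : ENNReal) =
      ∑' z : ℕ × ℕ, if z.1 + 1 ≤ X ω ∧ z.2 + 1 ≤ Y ω then (1 : ENNReal) else 0 := by
    intro ω
    rw [natCast_eq_tsum_ite (X ω), natCast_eq_tsum_ite (Y ω), ← ENNReal.tsum_mul_right,
      ENNReal.tsum_prod']
    simp_rw [← ENNReal.tsum_mul_left]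
    refine tsum_congr fun m => tsum_congr fun n => ?_
    by_cases h1 : m + 1 ≤ X ω <;> by_cases h2 : n + 1 ≤ Y ω <;> simp [h1, h2]
  simp_rw [h1]
  have hms : ∀ z : ℕ × ℕ, MeasurableSet {ω | z.1 + 1 ≤ X ω ∧ z.2 + 1 ≤ Y ω} := fun z =>
    (meas_set_ge hXm z.1).inter (meas_set_ge hYm z.2)
  rw [lintegral_tsum (fun z => (Measurable.ite (hms z)
    measurable_const measurable_const).aemeasurable)]
  exact tsum_congr fun z =>
    lintegral_ite_one P (fun ω => z.1 + 1 ≤ X ω ∧ z.2 + 1 ≤ Y ω) (hms z)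

set_option maxHeartbeats 1000000 in
/-- Covariance bound for ℕ-valued random variables:
`|E[XY] − E[X]E[Y]| ≤ ∑_{m,n ≥ 1} |P(X ≥ m, Y ≥ n) − P(X ≥ m) P(Y ≥ n)|`. -/
theorem covariance_bound_nat_valued
    {Ω : Type*} [MeasurableSpace Ω] (P : Measure Ω) [IsProbabilityMeasure P]
    (X Y : Ω → ℕ) (hXm : Measurable X) (hYm : Measurable Y)
    (hX : Integrable (fun ω => (X ω : ℝ)) P)
    (hY : Integrable (fun ω => (Y ω : ℝ)) P)
    (hXY : Integrable (fun ω => (X ω : ℝ) * (Y ω : ℝ)) P) :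
    ENNReal.ofReal
        |(∫ ω, (X ω : ℝ) * (Y ω : ℝ) ∂P) - (∫ ω, (X ω : ℝ) ∂P) * ∫ ω, (Y ω : ℝ) ∂P| ≤
      ∑' m : ℕ, ∑' n : ℕ,
        ENNReal.ofReal
          |(P {ω | m + 1 ≤ X ω ∧ n + 1 ≤ Y ω}).toReal -
            (P {ω | m + 1 ≤ X ω}).toReal * (P {ω | n + 1 ≤ Y ω}).toReal| := by
  set p : ℕ → ENNReal := fun m => P {ω | m + 1 ≤ X ω} with hp_def
  set q : ℕ → ENNReal := fun n => P {ω | n + 1 ≤ Y ω} with hq_def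
  set f : ℕ × ℕ → ENNReal := fun z => P {ω | z.1 + 1 ≤ X ω ∧ z.2 + 1 ≤ Y ω} with hf_def
  -- finiteness of the lintegrals
  have hXof : ∀ ω, ENNReal.ofReal ((X ω : ℝ)) = (X ω : ENNReal) := fun ω =>
    ENNReal.ofReal_natCast _
  have hYof : ∀ ω, ENNReal.ofReal ((Y ω : ℝ)) = (Y ω : ENNReal) := fun ω =>
    ENNReal.ofReal_natCast _
  have hXYof : ∀ ω, ENNReal.ofReal ((X ω : ℝ) * (Y ω : ℝ)) =
      (X ω : ENNReal) * (Y ω : ENNReal) := fun ω => by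
    rw [ENNReal.ofReal_mul (by positivity), hXof, hYof]
  have hXfin : ∫⁻ ω, (X ω : ENNReal) ∂P ≠ ⊤ := by
    have := hX.hasFiniteIntegral
    rw [hasFiniteIntegral_iff_ofReal (Filter.Eventually.of_forall fun ω => by positivity)]
      at this
    simpa only [hXof] using this.ne
  have hYfin : ∫⁻ ω, (Y ω : ENNReal) ∂P ≠ ⊤ := by
    have := hY.hasFiniteIntegral
    rw [hasFiniteIntegral_iff_ofReal (Filter.Eventually.of_forall fun ω => by positivity)]
      at this
    simpa only [hYof] using this.ne
  have hXYfin : ∫⁻ ω, (X ω : ENNReal) * (Y ω : ENNReal) ∂P ≠ ⊤ := by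
    have := hXY.hasFiniteIntegral
    rw [hasFiniteIntegral_iff_ofReal (Filter.Eventually.of_forall fun ω => by positivity)]
      at this
    simpa only [hXYof] using this.ne
  -- tsum expressions
  have hpsum : ∑' m, p m = ∫⁻ ω, (X ω : ENNReal) ∂P :=
    (lintegral_natCast_eq_tsum P hXm).symm
  have hqsum : ∑' n, q n = ∫⁻ ω, (Y ω : ENNReal) ∂P :=
    (lintegral_natCast_eq_tsum P hYm).symm
  have hfsum : ∑' z, f z = ∫⁻ ω, (X ω : ENNReal) * (Y ω : ENNReal) ∂P :=
    (lintegral_mul_natCast_eq_tsum P hXm hYm).symm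
  have hpfin : ∑' m, p m ≠ ⊤ := hpsum ▸ hXfin
  have hqfin : ∑' n, q n ≠ ⊤ := hqsum ▸ hYfin
  have hffin : ∑' z, f z ≠ ⊤ := hfsum ▸ hXYfin
  have hpqprod : ∑' z : ℕ × ℕ, p z.1 * q z.2 = (∑' m, p m) * ∑' n, q n := by
    rw [ENNReal.tsum_prod']
    simp_rw [ENNReal.tsum_mul_left]
    rw [ENNReal.tsum_mul_right]
  have hpqfin : ∑' z : ℕ × ℕ, p z.1 * q z.2 ≠ ⊤ := by
    rw [hpqprod]; exact ENNReal.mul_ne_top hpfin hqfin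
  -- real integrals as tsums
  have hIX : ∫ ω, (X ω : ℝ) ∂P = (∑' m, p m).toReal := by
    rw [integral_eq_lintegral_of_nonneg_ae (Filter.Eventually.of_forall fun ω => by positivity)
      hX.1]
    simp_rw [hXof]
    rw [hpsum]
  have hIY : ∫ ω, (Y ω : ℝ) ∂P = (∑' n, q n).toReal := by
    rw [integral_eq_lintegral_of_nonneg_ae (Filter.Eventually.of_forall fun ω => by positivity)
      hY.1]
    simp_rw [hYof]
    rw [hqsum]
  have hIXY : ∫ ω, (X ω : ℝ) * (Y ω : ℝ) ∂P = (∑' z, f z).toReal := by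
    rw [integral_eq_lintegral_of_nonneg_ae (Filter.Eventually.of_forall fun ω => by positivity)
      hXY.1]
    simp_rw [hXYof]
    rw [hfsum]
  -- each term finite
  have hfne : ∀ z, f z ≠ ⊤ := fun z => measure_ne_top P _
  have hpqne : ∀ z : ℕ × ℕ, p z.1 * q z.2 ≠ ⊤ := fun z =>
    ENNReal.mul_ne_top (measure_ne_top P _) (measure_ne_top P _)
  -- real summability
  have sf : Summable fun z : ℕ × ℕ => (f z).toReal := ENNReal.summable_toReal hffin
  have spq : Summable fun z : ℕ × ℕ => (p z.1 * q z.2).toReal := ENNReal.summable_toReal hpqfin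
  have sg : Summable fun z : ℕ × ℕ => (f z).toReal - (p z.1 * q z.2).toReal := sf.sub spq
  -- express the difference as a single tsum
  have key : (∫ ω, (X ω : ℝ) * (Y ω : ℝ) ∂P) - (∫ ω, (X ω : ℝ) ∂P) * ∫ ω, (Y ω : ℝ) ∂P =
      ∑' z : ℕ × ℕ, ((f z).toReal - (p z.1 * q z.2).toReal) := by
    rw [hIX, hIY, hIXY, ← ENNReal.toReal_mul, ← hpqprod,
      ENNReal.tsum_toReal_eq hfne, ENNReal.tsum_toReal_eq hpqne, Summable.tsum_sub sf spq]
  calc ENNReal.ofReal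
        |(∫ ω, (X ω : ℝ) * (Y ω : ℝ) ∂P) - (∫ ω, (X ω : ℝ) ∂P) * ∫ ω, (Y ω : ℝ) ∂P|
      ≤ ENNReal.ofReal (∑' z : ℕ × ℕ, |(f z).toReal - (p z.1 * q z.2).toReal|) := by
        apply ENNReal.ofReal_le_ofReal
        rw [key]
        have habs : Summable fun z : ℕ × ℕ => ‖(f z).toReal - (p z.1 * q z.2).toReal‖ := by
          simpa only [Real.norm_eq_abs] using sg.abs
        simpa only [Real.norm_eq_abs] using norm_tsum_le_tsum_norm habs
    _ = ∑' z : ℕ × ℕ, ENNReal.ofReal |(f z).toReal - (p z.1 * q z.2).toReal| :=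
        ENNReal.ofReal_tsum_of_nonneg (fun z => abs_nonneg _) sg.abs
    _ = ∑' m : ℕ, ∑' n : ℕ,
          ENNReal.ofReal |(f (m, n)).toReal - (p m * q n).toReal| := ENNReal.tsum_prod'
    _ = ∑' m : ℕ, ∑' n : ℕ,
          ENNReal.ofReal
            |(P {ω | m + 1 ≤ X ω ∧ n + 1 ≤ Y ω}).toReal -
              (P {ω | m + 1 ≤ X ω}).toReal * (P {ω | n + 1 ≤ Y ω}).toReal| :=
        tsum_congr fun m => tsum_congr fun n => by
          rw [ENNReal.toReal_mul]
end
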